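/- arXiv:2501.02289 — 13 statements merged into one kernel-verified Lean document; each statement's English description precedes it below -/
import Mathlib

section
/- Let n ≥ 2 be an integer and d ∈ [0,1). Then ∫₀^π sin^{n−2}(θ)·R_d(θ)ⁿ dθ = ∫₀^π sin^{n−2}(θ) dθ, where R_d(θ) = d·cos θ + √(1 − d²·sin² θ). (Equivalently, with a ∈ (0,1) fixed, W₁ⁿ(d) := ∫₀^π sin^{n−2}(θ)·(R_d(θ)ⁿ − aⁿ) dθ satisfies W₁ⁿ(d) = W₁ⁿ(0).) -/
/-!
Parametrise the unit circle centred at `(d, 0)` by `α ↦ (d + cos α, sin α)` and let `θ(α)` and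
`r(α) = √(1 + 2d cos α + d²)` be the polar coordinates of that point. Since `|d| < 1` the origin is
inside the circle, so `α ↦ θ(α)` is an increasing bijection of `[0, π]`, and the ray at angle `θ`
meets the circle at distance `R_d(θ)`, i.e. `R_d(θ(α)) = r(α)`. With `sin θ = sin α / r` and
`dθ/dα = (1 + d cos α) / r²`, the substitution `θ = θ(α)` turns `sin^m θ · R_d(θ)^(m+2) dθ` into
`sin^m α · (1 + d cos α) dα`, and the `cos α` term integrates to zero over `[0, π]`.
-/

open Real Set intervalIntegral

namespace ShiftedUnitCircle

noncomputable def boundaryRadius (d θ : ℝ) : ℝ := d * cos θ + √(1 - d ^ 2 * sin θ ^ 2)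

noncomputable def rad (d α : ℝ) : ℝ := √(1 + 2 * d * cos α + d ^ 2)

noncomputable def polarAngle (d α : ℝ) : ℝ := arccos ((cos α + d) / rad d α)

variable {d : ℝ}

theorem neg_abs_le_mul_cos (d α : ℝ) : -|d| ≤ d * cos α := by
  have h := neg_abs_le (d * cos α)
  rw [abs_mul] at h
  nlinarith [mul_nonneg (abs_nonneg d) (sub_nonneg.2 (abs_cos_le_one α))]

theorem one_add_two_mul_cos_add_sq_pos (hd : |d| < 1) (α : ℝ) : 0 < 1 + 2 * d * cos α + d ^ 2 := by
  nlinarith [neg_abs_le_mul_cos d α, sq_abs d, pow_pos (sub_pos.2 hd) 2]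

theorem one_add_mul_cos_pos (hd : |d| < 1) (α : ℝ) : 0 < 1 + d * cos α := by
  linarith [neg_abs_le_mul_cos d α]

theorem rad_pos (hd : |d| < 1) (α : ℝ) : 0 < rad d α := sqrt_pos.2 (one_add_two_mul_cos_add_sq_pos hd α)

theorem rad_sq (hd : |d| < 1) (α : ℝ) : rad d α ^ 2 = 1 + 2 * d * cos α + d ^ 2 :=
  sq_sqrt (one_add_two_mul_cos_add_sq_pos hd α).le

theorem one_sub_sq_cos_add_div_rad (hd : |d| < 1) (α : ℝ) :
    1 - ((cos α + d) / rad d α) ^ 2 = (sin α / rad d α) ^ 2 := by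
  have := (rad_pos hd α).ne'
  field_simp
  nlinarith [sin_sq_add_cos_sq α, rad_sq hd α]

theorem cos_polarAngle (hd : |d| < 1) (α : ℝ) :
    cos (polarAngle d α) = (cos α + d) / rad d α := by
  have h : |(cos α + d) / rad d α| ≤ 1 := by
    rw [← sq_le_one_iff_abs_le_one]
    nlinarith [one_sub_sq_cos_add_div_rad hd α, sq_nonneg (sin α / rad d α)]
  exact cos_arccos (abs_le.1 h).1 (abs_le.1 h).2

theorem sin_polarAngle (hd : |d| < 1) {α : ℝ} (hα : α ∈ Icc 0 π) :
    sin (polarAngle d α) = sin α / rad d α := by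
  rw [polarAngle, sin_arccos, one_sub_sq_cos_add_div_rad hd α]
  exact sqrt_sq (div_nonneg (sin_nonneg_of_mem_Icc hα) (rad_pos hd α).le)

theorem polarAngle_zero (hd : |d| < 1) : polarAngle d 0 = 0 := by
  have h : 0 < 1 + d := by linarith [neg_abs_le d]
  have hr : rad d 0 = 1 + d := by
    rw [rad, cos_zero, show 1 + 2 * d * 1 + d ^ 2 = (1 + d) ^ 2 by ring, sqrt_sq h.le]
  rw [polarAngle, hr, cos_zero, div_self h.ne', arccos_one]

theorem polarAngle_pi (hd : |d| < 1) : polarAngle d π = π := by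
  have h : 0 < 1 - d := by linarith [le_abs_self d]
  have hr : rad d π = 1 - d := by
    rw [rad, cos_pi, show 1 + 2 * d * -1 + d ^ 2 = (1 - d) ^ 2 by ring, sqrt_sq h.le]
  rw [polarAngle, hr, cos_pi, show (-1 + d) / (1 - d) = -1 by field_simp; ring, arccos_neg_one]

theorem continuous_polarAngle (hd : |d| < 1) : Continuous (polarAngle d) :=
  continuous_arccos.comp <| (continuous_cos.add continuous_const).div (by unfold rad; fun_prop)
    fun α => (rad_pos hd α).ne'

theorem hasDerivAt_polarAngle (hd : |d| < 1) {α : ℝ} (hα : α ∈ Ioo 0 π) :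
    HasDerivAt (polarAngle d) ((1 + d * cos α) / rad d α ^ 2) α := by
  have hr := rad_pos hd α
  have hs := sin_pos_of_pos_of_lt_pi hα.1 hα.2
  have hsin : 0 < sin α / rad d α := div_pos hs hr
  have hrad : HasDerivAt (rad d) (2 * d * -sin α / (2 * rad d α)) α := by
    have h := (((hasDerivAt_cos α).const_mul (2 * d)).const_add 1).add_const (d ^ 2)
    exact h.sqrt (one_add_two_mul_cos_add_sq_pos hd α).ne'
  have hsq : ((cos α + d) / rad d α) ^ 2 < 1 := by
    nlinarith [one_sub_sq_cos_add_div_rad hd α, pow_pos hsin 2]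
  have hne : (cos α + d) / rad d α ≠ -1 ∧ (cos α + d) / rad d α ≠ 1 := by
    constructor <;> intro h <;> rw [h] at hsq <;> norm_num at hsq
  have hquot : HasDerivAt (fun x => (cos x + d) / rad d x)
      ((-sin α * rad d α - (cos α + d) * (2 * d * -sin α / (2 * rad d α))) / rad d α ^ 2) α :=
    ((hasDerivAt_cos α).add_const d).div hrad hr.ne'
  refine ((hasDerivAt_arccos hne.1 hne.2).comp α hquot).congr_deriv ?_
  rw [one_sub_sq_cos_add_div_rad hd α, sqrt_sq hsin.le]
  have := hs.ne'
  field_simp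
  linear_combination rad_sq hd α

theorem boundaryRadius_polarAngle (hd : |d| < 1) {α : ℝ} (hα : α ∈ Icc 0 π) :
    boundaryRadius d (polarAngle d α) = rad d α := by
  have hr := rad_pos hd α
  have hsqrt : √(1 - d ^ 2 * (sin α / rad d α) ^ 2) = (1 + d * cos α) / rad d α := by
    rw [← sqrt_sq (div_pos (one_add_mul_cos_pos hd α) hr).le]
    congr 1
    field_simp
    nlinarith [sin_sq_add_cos_sq α, rad_sq hd α]
  rw [boundaryRadius, cos_polarAngle hd, sin_polarAngle hd hα, hsqrt]
  field_simp
  linear_combination (-1) * rad_sq hd α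

theorem integral_comp_polarAngle (hd : |d| < 1) {g : ℝ → ℝ} (hg : Continuous g) :
    ∫ θ in 0..π, g θ = ∫ α in 0..π, (1 + d * cos α) / rad d α ^ 2 * g (polarAngle d α) := by
  have hderiv : ∀ α ∈ Ioo (min 0 π) (max 0 π),
      HasDerivWithinAt (polarAngle d) ((1 + d * cos α) / rad d α ^ 2) (Ioi α) α := by
    rw [min_eq_left pi_pos.le, max_eq_right pi_pos.le]
    exact fun α hα => (hasDerivAt_polarAngle hd hα).hasDerivWithinAt
  have hcont : Continuous fun α => (1 + d * cos α) / rad d α ^ 2 :=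
    (by fun_prop : Continuous fun α => 1 + d * cos α).div
      (by unfold rad; fun_prop) fun α => (pow_pos (rad_pos hd α) 2).ne'
  have h := integral_deriv_smul_comp'' (continuous_polarAngle hd).continuousOn hderiv
    hcont.continuousOn hg.continuousOn
  rw [polarAngle_zero hd, polarAngle_pi hd] at h
  exact h.symm

theorem integral_sin_pow_mul_cos (m : ℕ) : ∫ α in 0..π, sin α ^ m * cos α = 0 := by
  simpa using integral_sin_pow_mul_cos_pow_odd (a := 0) (b := π) m 0

theorem integral_sin_pow_mul_boundaryRadius_pow (hd : |d| < 1) (m : ℕ) :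
    ∫ θ in 0..π, sin θ ^ m * boundaryRadius d θ ^ (m + 2) = ∫ θ in 0..π, sin θ ^ m := by
  have hcont : Continuous fun θ => sin θ ^ m * boundaryRadius d θ ^ (m + 2) := by
    unfold boundaryRadius; fun_prop
  have hpointwise : EqOn
      (fun α => (1 + d * cos α) / rad d α ^ 2 *
        (sin (polarAngle d α) ^ m * boundaryRadius d (polarAngle d α) ^ (m + 2)))
      (fun α => sin α ^ m + d * (sin α ^ m * cos α)) (uIcc 0 π) := by
    intro α hα
    rw [uIcc_of_le pi_pos.le] at hα
    have := (rad_pos hd α).ne'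
    simp only [sin_polarAngle hd hα, boundaryRadius_polarAngle hd hα, div_pow]
    field_simp
    ring
  rw [integral_comp_polarAngle hd hcont, integral_congr hpointwise,
    integral_add (by apply Continuous.intervalIntegrable; fun_prop)
      (by apply Continuous.intervalIntegrable; fun_prop),
    integral_const_mul, integral_sin_pow_mul_cos, mul_zero, add_zero]

end ShiftedUnitCircle

open ShiftedUnitCircle in
theorem stmt_3_general (n : ℕ) (hn : 2 ≤ n) (d : ℝ) (hd : d ∈ Set.Ico (0:ℝ) 1)
    (a : ℝ) :
    (∫ θ in (0:ℝ)..π, Real.sin θ ^ (n - 2) *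
        (d * Real.cos θ + Real.sqrt (1 - d ^ 2 * Real.sin θ ^ 2)) ^ n)
      = ∫ θ in (0:ℝ)..π, Real.sin θ ^ (n - 2) ∧
    (∫ θ in (0:ℝ)..π, Real.sin θ ^ (n - 2) *
        ((d * Real.cos θ + Real.sqrt (1 - d ^ 2 * Real.sin θ ^ 2)) ^ n - a ^ n))
      = ∫ θ in (0:ℝ)..π, Real.sin θ ^ (n - 2) *
        ((0 * Real.cos θ + Real.sqrt (1 - 0 ^ 2 * Real.sin θ ^ 2)) ^ n - a ^ n) := by
  obtain ⟨m, rfl⟩ := Nat.exists_eq_add_of_le' hn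
  have key : ∀ e : ℝ, |e| < 1 →
      ∫ θ in (0:ℝ)..π, sin θ ^ m * (e * cos θ + √(1 - e ^ 2 * sin θ ^ 2)) ^ (m + 2)
        = ∫ θ in (0:ℝ)..π, sin θ ^ m :=
    fun e he => integral_sin_pow_mul_boundaryRadius_pow he m
  have hd' : |d| < 1 := abs_lt.2 ⟨by linarith [hd.1], hd.2⟩
  simp only [Nat.add_sub_cancel, mul_sub]
  refine ⟨key d hd', ?_⟩
  rw [integral_sub (by apply Continuous.intervalIntegrable; fun_prop)
      (by apply Continuous.intervalIntegrable; fun_prop),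
    integral_sub (by apply Continuous.intervalIntegrable; fun_prop)
      (by apply Continuous.intervalIntegrable; fun_prop),
    key d hd', key 0 (by simp)]

/-- For `n ≥ 2` and `d ∈ [0,1)`,
`∫₀^π sin^{n−2}(θ)·R_d(θ)ⁿ dθ = ∫₀^π sin^{n−2}(θ) dθ`, where
`R_d(θ) = d·cos θ + √(1 − d²·sin² θ)`; equivalently, for `a ∈ (0,1)`,
`W₁ⁿ(d) = ∫₀^π sin^{n−2}(θ)·(R_d(θ)ⁿ − aⁿ) dθ` satisfies `W₁ⁿ(d) = W₁ⁿ(0)`. -/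
theorem stmt_3 (n : ℕ) (hn : 2 ≤ n) (d : ℝ) (hd : d ∈ Set.Ico (0:ℝ) 1)
    (a : ℝ) (ha : a ∈ Set.Ioo (0:ℝ) 1) :
    (∫ θ in (0:ℝ)..π, Real.sin θ ^ (n - 2) *
        (d * Real.cos θ + Real.sqrt (1 - d ^ 2 * Real.sin θ ^ 2)) ^ n)
      = ∫ θ in (0:ℝ)..π, Real.sin θ ^ (n - 2) ∧
    (∫ θ in (0:ℝ)..π, Real.sin θ ^ (n - 2) *
        ((d * Real.cos θ + Real.sqrt (1 - d ^ 2 * Real.sin θ ^ 2)) ^ n - a ^ n))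
      = ∫ θ in (0:ℝ)..π, Real.sin θ ^ (n - 2) *
        ((0 * Real.cos θ + Real.sqrt (1 - 0 ^ 2 * Real.sin θ ^ 2)) ^ n - a ^ n) :=
  stmt_3_general n hn d hd a
end

section
/- Let n ≥ 2 be an integer, a ∈ (0,1) and d ∈ [0,1). Define φ_n(θ) = −n·sinⁿ(θ) + (n−1)·sin^{n−2}(θ) and R_d(θ) = d·cos θ + √(1 − d²·sin² θ). Then W₂ⁿ(d) := ∫₀^π φ_n(θ)·ln(R_d(θ)/a) dθ = 0. -/
/-!
The weight `φ_n` is symmetric under `θ ↦ π - θ` and has integral zero by the Wallis recursion,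
while `R_d(θ) · R_d(π - θ) = 1 - d²`. Hence the reflection sum `log (R_d(θ)/a) + log (R_d(π - θ)/a)`
is the constant `log ((1 - d²)/a²)`, and averaging the integral with its reflection leaves
that constant times `∫₀^π φ_n = 0`.
-/

open Real intervalIntegral

theorem integral_add_comp_add_sub {f : ℝ → ℝ} {a b : ℝ}
    (hf : IntervalIntegrable f MeasureTheory.volume a b) :
    ∫ x in a..b, (f x + f (a + b - x)) = 2 * ∫ x in a..b, f x := by
  have hrefl : IntervalIntegrable (fun x => f (a + b - x)) MeasureTheory.volume a b := by
    simpa using (hf.comp_sub_left (a + b)).symm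
  rw [integral_add hf hrefl, integral_comp_sub_left, add_sub_cancel_right, add_sub_cancel_left,
    two_mul]

-- A non-integrable `φ * g` has integral `0` by convention, which covers the remaining case.
theorem integral_mul_eq_zero_of_reflect {φ g : ℝ → ℝ} {a b c : ℝ}
    (hφ : ∀ x, φ (a + b - x) = φ x) (hφ0 : ∫ x in a..b, φ x = 0)
    (hg : ∀ x, g x + g (a + b - x) = c) : ∫ x in a..b, φ x * g x = 0 := by
  by_cases hint : IntervalIntegrable (fun x => φ x * g x) MeasureTheory.volume a b
  · have h2 : 2 * ∫ x in a..b, φ x * g x = 0 := by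
      rw [← integral_add_comp_add_sub hint]
      simp_rw [hφ, ← mul_add, hg, integral_mul_const, hφ0, zero_mul]
    simpa using h2
  · exact integral_undef hint

theorem integral_sin_pow_add_two_mul (m : ℕ) :
    ((m : ℝ) + 2) * ∫ x in 0..π, sin x ^ (m + 2) = (m + 1) * ∫ x in 0..π, sin x ^ m := by
  rw [integral_sin_pow]
  simp only [sin_zero, sin_pi, ne_eq, Nat.add_eq_zero_iff, one_ne_zero, and_false,
    not_false_eq_true, zero_pow, zero_mul, sub_self, zero_div, zero_add]
  field_simp

noncomputable def wallisWeight (n : ℕ) (θ : ℝ) : ℝ :=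
  -n * sin θ ^ n + (n - 1) * sin θ ^ (n - 2)

theorem wallisWeight_pi_sub (n : ℕ) (θ : ℝ) : wallisWeight n (π - θ) = wallisWeight n θ := by
  simp [wallisWeight]

theorem integral_wallisWeight {n : ℕ} (hn : 2 ≤ n) : ∫ θ in 0..π, wallisWeight n θ = 0 := by
  obtain ⟨m, rfl⟩ := Nat.exists_eq_add_of_le' hn
  have hint (k : ℕ) : IntervalIntegrable (fun θ => sin θ ^ k) MeasureTheory.volume 0 π :=
    (continuous_sin.pow k).intervalIntegrable 0 π
  simp only [wallisWeight]
  rw [integral_add ((hint _).const_mul _) ((hint _).const_mul _), integral_const_mul,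
    integral_const_mul, Nat.add_sub_cancel, neg_mul, ← sub_eq_neg_add, sub_eq_zero]
  push_cast
  rw [integral_sin_pow_add_two_mul]
  ring

-- For `|d| < 1`, the distance from the point `(d, 0)` to the unit circle in the direction `θ`.
noncomputable def rayLength (d θ : ℝ) : ℝ :=
  d * cos θ + √(1 - d ^ 2 * sin θ ^ 2)

theorem rayLength_mul_rayLength_pi_sub {d : ℝ} (hd : d ^ 2 ≤ 1) (θ : ℝ) :
    rayLength d θ * rayLength d (π - θ) = 1 - d ^ 2 := by
  have hsqrt : √(1 - d ^ 2 * sin θ ^ 2) ^ 2 = 1 - d ^ 2 * sin θ ^ 2 :=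
    sq_sqrt (by nlinarith [sin_sq_le_one θ])
  simp only [rayLength, sin_pi_sub, cos_pi_sub]
  linear_combination hsqrt - d ^ 2 * sin_sq_add_cos_sq θ

theorem log_div_add_log_div {x y : ℝ} (hx : x ≠ 0) (hy : y ≠ 0) (a : ℝ) :
    log (x / a) + log (y / a) = log (x * y / a ^ 2) := by
  rcases eq_or_ne a 0 with rfl | ha
  · simp
  · rw [← log_mul (div_ne_zero hx ha) (div_ne_zero hy ha)]
    ring_nf

theorem stmt_4_general (n : ℕ) (hn : 2 ≤ n) (a : ℝ)
    (d : ℝ) (hd : d ∈ Set.Ico (0:ℝ) 1) :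
    (∫ θ in (0:ℝ)..π,
        (-(n : ℝ) * Real.sin θ ^ n + ((n : ℝ) - 1) * Real.sin θ ^ (n - 2)) *
          Real.log ((d * Real.cos θ + Real.sqrt (1 - d ^ 2 * Real.sin θ ^ 2)) / a))
      = 0 := by
  have hd2 : d ^ 2 < 1 := by nlinarith [hd.1, hd.2]
  have hR (θ : ℝ) := rayLength_mul_rayLength_pi_sub hd2.le θ
  have hR0 (θ : ℝ) : rayLength d θ * rayLength d (π - θ) ≠ 0 := by
    rw [hR]
    linarith
  refine integral_mul_eq_zero_of_reflect (φ := wallisWeight n)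
    (g := fun θ => log (rayLength d θ / a)) (c := log ((1 - d ^ 2) / a ^ 2))
    (by simpa using wallisWeight_pi_sub n) (integral_wallisWeight hn) fun θ => ?_
  obtain ⟨h1, h2⟩ := mul_ne_zero_iff.mp (hR0 θ)
  rw [zero_add, log_div_add_log_div h1 h2, hR]

/-- For `n ≥ 2`, `a ∈ (0,1)`, `d ∈ [0,1)`, with
`φ_n(θ) = −n·sinⁿθ + (n−1)·sin^{n−2}θ` and `R_d(θ) = d·cos θ + √(1 − d²·sin² θ)`,
one has `W₂ⁿ(d) = ∫₀^π φ_n(θ)·ln(R_d(θ)/a) dθ = 0`. -/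
theorem stmt_4 (n : ℕ) (hn : 2 ≤ n) (a : ℝ) (ha : a ∈ Set.Ioo (0:ℝ) 1)
    (d : ℝ) (hd : d ∈ Set.Ico (0:ℝ) 1) :
    (∫ θ in (0:ℝ)..π,
        (-(n : ℝ) * Real.sin θ ^ n + ((n : ℝ) - 1) * Real.sin θ ^ (n - 2)) *
          Real.log ((d * Real.cos θ + Real.sqrt (1 - d ^ 2 * Real.sin θ ^ 2)) / a))
      = 0 :=
  stmt_4_general n hn a d hd
end

section
/- Let n ≥ 2 be an integer, a ∈ (0,1) and d ∈ [0,1−a]. Define ψ_n(θ) = n(n−2)·sinⁿ(θ) + (n−1)·sin^{n−2}(θ) ≥ 0 and R_d(θ) = d·cos θ + √(1 − d²·sin² θ). Then W₃ⁿ(d) := ∫₀^π ψ_n(θ)·(R_d(θ)^{−n} − a^{−n}) dθ satisfies W₃ⁿ(d) ≥ W₃ⁿ(0), with equality if and only if d = 0. -/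
/-!
Write `W(d) - W(0) = ∫₀^π ψ_n(θ) (R_d(θ)^{-n} - 1) dθ` and average this integral with its image
under `θ ↦ π - θ`. The weight is invariant under this reflection, while
`R_d(θ) R_d(π - θ) = 1 - d²` (power of a point with respect to the unit circle). Since
`1/x + 1/y ≥ 2/√(xy) ≥ 2` whenever `xy ≤ 1`, the symmetrised integrand is nonnegative, and
positive on `(0, π)` when `d ≠ 0`.
-/

open Real MeasureTheory

noncomputable section

def weight (n : ℕ) (θ : ℝ) : ℝ :=
  (n : ℝ) * ((n : ℝ) - 2) * sin θ ^ n + ((n : ℝ) - 1) * sin θ ^ (n - 2)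

/-- The distance from the point at distance `d` from the centre of the unit disc to the unit
circle, in the direction making angle `θ` with the ray from the centre through that point. -/
def boundaryDist (d θ : ℝ) : ℝ :=
  d * cos θ + √(1 - d ^ 2 * sin θ ^ 2)

def excess (n : ℕ) (d θ : ℝ) : ℝ :=
  weight n θ * (1 / boundaryDist d θ ^ n - 1)

end

section Elementary

theorem two_le_one_div_add_one_div {x y : ℝ} (hx : 0 < x) (hy : 0 < y) (h : x * y ≤ 1) :
    2 ≤ 1 / x + 1 / y := by
  have hsum : 2 * (x * y) ≤ x + y := by
    nlinarith [sq_nonneg (x - y), sq_nonneg (x + y - 2 * (x * y)), mul_pos hx hy]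
  rw [div_add_div _ _ hx.ne' hy.ne', le_div_iff₀ (by positivity)]
  linarith

theorem two_lt_one_div_add_one_div {x y : ℝ} (hx : 0 < x) (hy : 0 < y) (h : x * y < 1) :
    2 < 1 / x + 1 / y := by
  have hsum : 2 * (x * y) < x + y := by
    nlinarith [sq_nonneg (x - y), sq_nonneg (x + y - 2 * (x * y)), mul_pos hx hy]
  rw [div_add_div _ _ hx.ne' hy.ne', lt_div_iff₀ (by positivity)]
  linarith

theorem two_mul_integral_eq_integral_add_comp_sub {f : ℝ → ℝ} {a b : ℝ}
    (hf : IntervalIntegrable f volume a b) :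
    2 * ∫ x in a..b, f x = ∫ x in a..b, (f x + f (a + b - x)) := by
  have hreflect : ∫ x in a..b, f (a + b - x) = ∫ x in a..b, f x := by
    simp [intervalIntegral.integral_comp_sub_left]
  have hf' : IntervalIntegrable (fun x => f (a + b - x)) volume a b := by
    simpa using (hf.comp_sub_left (a + b)).symm
  rw [intervalIntegral.integral_add hf hf', hreflect]
  ring

end Elementary

section Weight

variable {n : ℕ} {θ : ℝ}

theorem weight_nonneg (hn : 2 ≤ n) (hθ : 0 ≤ sin θ) : 0 ≤ weight n θ := by
  have h2 : (2 : ℝ) ≤ n := by exact_mod_cast hn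
  unfold weight
  have := pow_nonneg hθ n
  have := pow_nonneg hθ (n - 2)
  have : (0 : ℝ) ≤ n * (n - 2) := by nlinarith
  nlinarith

theorem weight_pos (hn : 2 ≤ n) (hθ : 0 < sin θ) : 0 < weight n θ := by
  have h2 : (2 : ℝ) ≤ n := by exact_mod_cast hn
  unfold weight
  have := pow_nonneg hθ.le n
  have := pow_pos hθ (n - 2)
  have : (0 : ℝ) ≤ n * (n - 2) := by nlinarith
  nlinarith

theorem weight_pi_sub (n : ℕ) (θ : ℝ) : weight n (π - θ) = weight n θ := by
  simp only [weight, sin_pi_sub]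

theorem continuous_weight (n : ℕ) : Continuous (weight n) := by
  unfold weight
  fun_prop

end Weight

section BoundaryDist

variable {d : ℝ}

theorem boundaryDist_zero (θ : ℝ) : boundaryDist 0 θ = 1 := by
  simp [boundaryDist]

theorem continuous_boundaryDist (d : ℝ) : Continuous (boundaryDist d) := by
  unfold boundaryDist
  fun_prop

theorem sq_sqrt_one_sub_sq_mul_sin_sq (hd : d ^ 2 ≤ 1) (θ : ℝ) :
    √(1 - d ^ 2 * sin θ ^ 2) ^ 2 = 1 - d ^ 2 * sin θ ^ 2 :=
  sq_sqrt (by nlinarith [sin_sq_le_one θ, sq_nonneg (sin θ), sq_nonneg d])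

theorem boundaryDist_pos (hd : d ^ 2 < 1) (θ : ℝ) : 0 < boundaryDist d θ := by
  have hs := sq_sqrt_one_sub_sq_mul_sin_sq hd.le θ
  have := sqrt_nonneg (1 - d ^ 2 * sin θ ^ 2)
  have := sin_sq_add_cos_sq θ
  unfold boundaryDist
  nlinarith [sq_nonneg (d * cos θ + √(1 - d ^ 2 * sin θ ^ 2))]

theorem boundaryDist_mul_boundaryDist_pi_sub (hd : d ^ 2 ≤ 1) (θ : ℝ) :
    boundaryDist d θ * boundaryDist d (π - θ) = 1 - d ^ 2 := by
  unfold boundaryDist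
  rw [cos_pi_sub, sin_pi_sub]
  linear_combination sq_sqrt_one_sub_sq_mul_sin_sq hd θ - d ^ 2 * sin_sq_add_cos_sq θ

end BoundaryDist

section Excess

variable {n : ℕ} {d θ : ℝ}

theorem continuous_excess (hd : d ^ 2 < 1) : Continuous (excess n d) := by
  unfold excess
  exact (continuous_weight n).mul ((continuous_const.div ((continuous_boundaryDist d).pow n)
    fun θ => pow_ne_zero n (boundaryDist_pos hd θ).ne').sub continuous_const)

theorem excess_add_excess_pi_sub (θ : ℝ) :
    excess n d θ + excess n d (π - θ) =
      weight n θ * (1 / boundaryDist d θ ^ n + 1 / boundaryDist d (π - θ) ^ n - 2) := by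
  rw [excess, excess, weight_pi_sub]
  ring

theorem excess_add_excess_pi_sub_nonneg (hn : 2 ≤ n) (hd : d ^ 2 < 1)
    (hθ : θ ∈ Set.Icc 0 π) : 0 ≤ excess n d θ + excess n d (π - θ) := by
  have hprod : boundaryDist d θ ^ n * boundaryDist d (π - θ) ^ n ≤ 1 := by
    rw [← mul_pow, boundaryDist_mul_boundaryDist_pi_sub hd.le]
    exact pow_le_one₀ (by linarith) (by nlinarith)
  have := two_le_one_div_add_one_div (pow_pos (boundaryDist_pos hd θ) n)
    (pow_pos (boundaryDist_pos hd (π - θ)) n) hprod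
  rw [excess_add_excess_pi_sub]
  exact mul_nonneg (weight_nonneg hn (sin_nonneg_of_nonneg_of_le_pi hθ.1 hθ.2)) (by linarith)

theorem excess_add_excess_pi_sub_pos (hn : 2 ≤ n) (hd : d ^ 2 < 1) (hd0 : d ≠ 0)
    (hθ : θ ∈ Set.Ioo 0 π) : 0 < excess n d θ + excess n d (π - θ) := by
  have hprod : boundaryDist d θ ^ n * boundaryDist d (π - θ) ^ n < 1 := by
    rw [← mul_pow, boundaryDist_mul_boundaryDist_pi_sub hd.le]
    exact pow_lt_one₀ (by linarith) (by linarith [pow_pos (abs_pos.2 hd0) 2, sq_abs d])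
      (by omega)
  have := two_lt_one_div_add_one_div (pow_pos (boundaryDist_pos hd θ) n)
    (pow_pos (boundaryDist_pos hd (π - θ)) n) hprod
  rw [excess_add_excess_pi_sub]
  exact mul_pos (weight_pos hn (sin_pos_of_pos_of_lt_pi hθ.1 hθ.2)) (by linarith)

theorem two_mul_integral_excess (hd : d ^ 2 < 1) :
    2 * ∫ θ in 0..π, excess n d θ = ∫ θ in 0..π, (excess n d θ + excess n d (π - θ)) := by
  simpa using two_mul_integral_eq_integral_add_comp_sub
    ((continuous_excess (n := n) hd).intervalIntegrable 0 π)

theorem integral_excess_nonneg (hn : 2 ≤ n) (hd : d ^ 2 < 1) :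
    0 ≤ ∫ θ in 0..π, excess n d θ := by
  have := two_mul_integral_excess (n := n) hd
  have : 0 ≤ ∫ θ in 0..π, (excess n d θ + excess n d (π - θ)) :=
    intervalIntegral.integral_nonneg pi_pos.le
      fun θ hθ => excess_add_excess_pi_sub_nonneg hn hd hθ
  linarith

theorem integral_excess_pos (hn : 2 ≤ n) (hd : d ^ 2 < 1) (hd0 : d ≠ 0) :
    0 < ∫ θ in 0..π, excess n d θ := by
  have := two_mul_integral_excess (n := n) hd
  have hcont : Continuous fun θ => excess n d θ + excess n d (π - θ) := by
    have := continuous_excess (n := n) hd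
    fun_prop
  have : 0 < ∫ θ in 0..π, (excess n d θ + excess n d (π - θ)) :=
    intervalIntegral.intervalIntegral_pos_of_pos_on (hcont.intervalIntegrable 0 π)
      (fun θ hθ => excess_add_excess_pi_sub_pos hn hd hd0 hθ) pi_pos
  linarith

theorem integral_eq_integral_zero_add_integral_excess (hd : d ^ 2 < 1) (c : ℝ) :
    ∫ θ in 0..π, weight n θ * (1 / boundaryDist d θ ^ n - c) =
      (∫ θ in 0..π, weight n θ * (1 / boundaryDist 0 θ ^ n - c)) +
        ∫ θ in 0..π, excess n d θ := by
  have hint : IntervalIntegrable (fun θ => weight n θ * (1 - c)) volume 0 π :=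
    ((continuous_weight n).mul continuous_const).intervalIntegrable 0 π
  simp only [boundaryDist_zero, one_pow, div_one]
  rw [← intervalIntegral.integral_add hint ((continuous_excess hd).intervalIntegrable 0 π)]
  congr 1 with θ
  rw [excess]
  ring

end Excess

/-- For `n ≥ 2`, `a ∈ (0,1)` and `d ∈ [0,1−a]`, with
`ψ_n(θ) = n(n−2)·sinⁿθ + (n−1)·sin^{n−2}θ ≥ 0` and
`R_d(θ) = d·cos θ + √(1 − d²·sin² θ)`, the quantity
`W₃ⁿ(d) = ∫₀^π ψ_n(θ)·(R_d(θ)^{−n} − a^{−n}) dθ` satisfies `W₃ⁿ(d) ≥ W₃ⁿ(0)`,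
with equality if and only if `d = 0`. -/
theorem stmt_5 (n : ℕ) (hn : 2 ≤ n) (a : ℝ) (ha : a ∈ Set.Ioo (0:ℝ) 1)
    (d : ℝ) (hd : d ∈ Set.Icc (0:ℝ) (1 - a)) :
    (∀ θ ∈ Set.Icc (0:ℝ) π, 0 ≤ (n : ℝ) * ((n : ℝ) - 2) * Real.sin θ ^ n
        + ((n : ℝ) - 1) * Real.sin θ ^ (n - 2)) ∧
    (∫ θ in (0:ℝ)..π,
        ((n : ℝ) * ((n : ℝ) - 2) * Real.sin θ ^ n + ((n : ℝ) - 1) * Real.sin θ ^ (n - 2)) *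
          (1 / (0 * Real.cos θ + Real.sqrt (1 - 0 ^ 2 * Real.sin θ ^ 2)) ^ n - 1 / a ^ n))
      ≤ (∫ θ in (0:ℝ)..π,
        ((n : ℝ) * ((n : ℝ) - 2) * Real.sin θ ^ n + ((n : ℝ) - 1) * Real.sin θ ^ (n - 2)) *
          (1 / (d * Real.cos θ + Real.sqrt (1 - d ^ 2 * Real.sin θ ^ 2)) ^ n - 1 / a ^ n)) ∧
    ((∫ θ in (0:ℝ)..π,
        ((n : ℝ) * ((n : ℝ) - 2) * Real.sin θ ^ n + ((n : ℝ) - 1) * Real.sin θ ^ (n - 2)) *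
          (1 / (d * Real.cos θ + Real.sqrt (1 - d ^ 2 * Real.sin θ ^ 2)) ^ n - 1 / a ^ n))
      = (∫ θ in (0:ℝ)..π,
        ((n : ℝ) * ((n : ℝ) - 2) * Real.sin θ ^ n + ((n : ℝ) - 1) * Real.sin θ ^ (n - 2)) *
          (1 / (0 * Real.cos θ + Real.sqrt (1 - 0 ^ 2 * Real.sin θ ^ 2)) ^ n - 1 / a ^ n))
      ↔ d = 0) := by
  have hd2 : d ^ 2 < 1 := by nlinarith [ha.1, hd.1, hd.2]
  show (∀ θ ∈ Set.Icc 0 π, 0 ≤ weight n θ) ∧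
    (∫ θ in 0..π, weight n θ * (1 / boundaryDist 0 θ ^ n - 1 / a ^ n)) ≤
      (∫ θ in 0..π, weight n θ * (1 / boundaryDist d θ ^ n - 1 / a ^ n)) ∧
    ((∫ θ in 0..π, weight n θ * (1 / boundaryDist d θ ^ n - 1 / a ^ n)) =
      (∫ θ in 0..π, weight n θ * (1 / boundaryDist 0 θ ^ n - 1 / a ^ n)) ↔ d = 0)
  rw [integral_eq_integral_zero_add_integral_excess hd2]
  refine ⟨fun θ hθ => weight_nonneg hn (sin_nonneg_of_nonneg_of_le_pi hθ.1 hθ.2),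
    le_add_of_nonneg_right (integral_excess_nonneg hn hd2), ⟨fun heq => ?_, ?_⟩⟩
  · by_contra hd0
    linarith [integral_excess_pos hn hd2 hd0]
  · rintro rfl
    simp [excess, boundaryDist_zero]
end

section
/- Let n ≥ 2 be an integer and d ∈ [0,1). Then V₁ⁿ(d) := ∫₀^π sinⁿ(θ)·R_d(θ)^{n+1}/√(1 − d²·sin² θ) dθ = ∫₀^π sinⁿ(θ) dθ = V₁ⁿ(0), where R_d(θ) = d·cos θ + √(1 − d²·sin² θ). (Equivalently, ∫₀^π sinⁿ(θ)·R_d(θ)ⁿ·√(R_d(θ)² + R_d'(θ)²) dθ is independent of d.) -/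
/-!
Substitute `θ = polarAngle d φ`, the polar angle (measured from the axis `(0, 1)`) of the point
`(sin φ, d + cos φ)` of the unit circle centred at `(0, d)`. That point lies at distance
`ρ = originDist d φ = √(1 + 2 d cos φ + d²)` from the origin, so `sin θ = sin φ / ρ` and
`R_d(θ) = ρ`, while `√(1 - d² sin² θ) = (1 + d cos φ) / ρ` and `dθ/dφ = (1 + d cos φ) / ρ²`.
All powers of `ρ` cancel and the integrand becomes `sinⁿ φ`.
-/

open Real

namespace ShiftedCircle

variable {d : ℝ}

lemma one_add_mul_cos_pos (hd : |d| < 1) (φ : ℝ) : 0 < 1 + d * cos φ := by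
  have : |d * cos φ| < 1 := by
    rw [abs_mul]; exact mul_lt_one_of_nonneg_of_lt_one_left (abs_nonneg d) hd (abs_cos_le_one φ)
  linarith [neg_abs_le (d * cos φ)]

lemma one_add_two_mul_cos_add_sq_pos (hd : |d| < 1) (φ : ℝ) :
    0 < 1 + 2 * d * cos φ + d ^ 2 := by
  nlinarith [one_add_mul_cos_pos hd φ, sq_nonneg (d * sin φ), sin_sq_add_cos_sq φ]

lemma one_sub_sq_mul_sin_sq_pos (hd : |d| < 1) (θ : ℝ) : 0 < 1 - d ^ 2 * sin θ ^ 2 := by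
  have : d ^ 2 < 1 := by rw [← sq_abs]; nlinarith [abs_nonneg d]
  nlinarith [sin_sq_le_one θ, sq_nonneg d]

lemma one_add_sq_div_one_add_mul_cos (hd : |d| < 1) (φ : ℝ) :
    1 + (d * sin φ / (1 + d * cos φ)) ^ 2
      = (1 + 2 * d * cos φ + d ^ 2) / (1 + d * cos φ) ^ 2 := by
  have := (one_add_mul_cos_pos hd φ).ne'
  field_simp
  linear_combination d ^ 2 * sin_sq_add_cos_sq φ

noncomputable def polarAngle (d φ : ℝ) : ℝ := φ - arctan (d * sin φ / (1 + d * cos φ))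

@[simp] lemma polarAngle_zero : polarAngle d 0 = 0 := by simp [polarAngle]

@[simp] lemma polarAngle_pi : polarAngle d π = π := by simp [polarAngle]

lemma hasDerivAt_polarAngle (hd : |d| < 1) (φ : ℝ) :
    HasDerivAt (polarAngle d) ((1 + d * cos φ) / (1 + 2 * d * cos φ + d ^ 2)) φ := by
  have hc := (one_add_mul_cos_pos hd φ).ne'
  have hs := (one_add_two_mul_cos_add_sq_pos hd φ).ne'
  have hquot : HasDerivAt (fun φ => d * sin φ / (1 + d * cos φ))
      ((d * cos φ + d ^ 2) / (1 + d * cos φ) ^ 2) φ := by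
    refine (((hasDerivAt_sin φ).const_mul d).div
      (((hasDerivAt_cos φ).const_mul d).const_add 1) hc).congr_deriv ?_
    field_simp
    linear_combination d ^ 2 * sin_sq_add_cos_sq φ
  refine ((hasDerivAt_id φ).sub hquot.arctan).congr_deriv ?_
  rw [one_add_sq_div_one_add_mul_cos hd]
  field_simp
  ring

noncomputable def originDist (d φ : ℝ) : ℝ := √(1 + 2 * d * cos φ + d ^ 2)

lemma originDist_pos (hd : |d| < 1) (φ : ℝ) : 0 < originDist d φ :=
  sqrt_pos.mpr (one_add_two_mul_cos_add_sq_pos hd φ)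

lemma originDist_sq (hd : |d| < 1) (φ : ℝ) :
    originDist d φ ^ 2 = 1 + 2 * d * cos φ + d ^ 2 :=
  sq_sqrt (one_add_two_mul_cos_add_sq_pos hd φ).le

lemma sqrt_one_add_sq_div_one_add_mul_cos (hd : |d| < 1) (φ : ℝ) :
    √(1 + (d * sin φ / (1 + d * cos φ)) ^ 2) = originDist d φ / (1 + d * cos φ) := by
  have hc := one_add_mul_cos_pos hd φ
  rw [one_add_sq_div_one_add_mul_cos hd, sqrt_div' _ (sq_nonneg _), sqrt_sq hc.le, originDist]

lemma sin_polarAngle (hd : |d| < 1) (φ : ℝ) :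
    sin (polarAngle d φ) = sin φ / originDist d φ := by
  have hc := (one_add_mul_cos_pos hd φ).ne'
  rw [polarAngle, sin_sub, sin_arctan, cos_arctan, sqrt_one_add_sq_div_one_add_mul_cos hd]
  field_simp
  ring

lemma cos_polarAngle (hd : |d| < 1) (φ : ℝ) :
    cos (polarAngle d φ) = (cos φ + d) / originDist d φ := by
  have hc : 1 + cos φ * d ≠ 0 := by rw [mul_comm]; exact (one_add_mul_cos_pos hd φ).ne'
  have hρ := (originDist_pos hd φ).ne'
  rw [polarAngle, cos_sub, sin_arctan, cos_arctan, sqrt_one_add_sq_div_one_add_mul_cos hd]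
  field_simp
  linear_combination d * sin_sq_add_cos_sq φ

lemma sqrt_one_sub_sq_mul_sin_sq_polarAngle (hd : |d| < 1) (φ : ℝ) :
    √(1 - d ^ 2 * sin (polarAngle d φ) ^ 2) = (1 + d * cos φ) / originDist d φ := by
  have hc := one_add_mul_cos_pos hd φ
  have hρ := originDist_pos hd φ
  rw [← sqrt_sq (div_pos hc hρ).le, sin_polarAngle hd]
  congr 1
  field_simp
  linear_combination originDist_sq hd φ - d ^ 2 * sin_sq_add_cos_sq φ

lemma mul_cos_polarAngle_add_sqrt (hd : |d| < 1) (φ : ℝ) :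
    d * cos (polarAngle d φ) + √(1 - d ^ 2 * sin (polarAngle d φ) ^ 2) = originDist d φ := by
  have hρ := (originDist_pos hd φ).ne'
  rw [cos_polarAngle hd, sqrt_one_sub_sq_mul_sin_sq_polarAngle hd]
  field_simp
  linear_combination -originDist_sq hd φ

lemma deriv_polarAngle_mul_integrand (hd : |d| < 1) (n : ℕ) (φ : ℝ) :
    (1 + d * cos φ) / (1 + 2 * d * cos φ + d ^ 2) *
      (sin (polarAngle d φ) ^ n *
        (d * cos (polarAngle d φ) + √(1 - d ^ 2 * sin (polarAngle d φ) ^ 2)) ^ (n + 1) /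
          √(1 - d ^ 2 * sin (polarAngle d φ) ^ 2)) = sin φ ^ n := by
  have hc := (one_add_mul_cos_pos hd φ).ne'
  have hρ := (originDist_pos hd φ).ne'
  rw [mul_cos_polarAngle_add_sqrt hd, sqrt_one_sub_sq_mul_sin_sq_polarAngle hd, sin_polarAngle hd,
    ← originDist_sq hd, div_pow]
  field_simp
  ring

end ShiftedCircle

open ShiftedCircle in
theorem stmt_7_general (n : ℕ) (d : ℝ) (hd : d ∈ Set.Ico (0:ℝ) 1) :
    (∫ θ in (0:ℝ)..π, Real.sin θ ^ n *
        (d * Real.cos θ + Real.sqrt (1 - d ^ 2 * Real.sin θ ^ 2)) ^ (n + 1) /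
          Real.sqrt (1 - d ^ 2 * Real.sin θ ^ 2))
      = ∫ θ in (0:ℝ)..π, Real.sin θ ^ n := by
  have hd1 : |d| < 1 := abs_lt.mpr ⟨by linarith [hd.1], hd.2⟩
  have hintegrand : Continuous fun θ => sin θ ^ n *
      (d * cos θ + √(1 - d ^ 2 * sin θ ^ 2)) ^ (n + 1) / √(1 - d ^ 2 * sin θ ^ 2) :=
    by fun_prop (disch := exact fun θ => (sqrt_pos.mpr (one_sub_sq_mul_sin_sq_pos hd1 θ)).ne')
  have hderiv : Continuous fun φ => (1 + d * cos φ) / (1 + 2 * d * cos φ + d ^ 2) :=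
    by fun_prop (disch := exact fun φ => (one_add_two_mul_cos_add_sq_pos hd1 φ).ne')
  conv_lhs => rw [← polarAngle_zero (d := d), ← polarAngle_pi (d := d)]
  rw [← intervalIntegral.integral_deriv_smul_comp (fun φ _ => hasDerivAt_polarAngle hd1 φ)
    hderiv.continuousOn hintegrand]
  simp only [smul_eq_mul, Function.comp_apply, deriv_polarAngle_mul_integrand hd1]

/-- For `n ≥ 2` and `d ∈ [0,1)`, with `R_d(θ) = d·cos θ + √(1 − d²·sin² θ)`,
`V₁ⁿ(d) = ∫₀^π sinⁿθ·R_d(θ)^{n+1}/√(1 − d²·sin² θ) dθ = ∫₀^π sinⁿθ dθ = V₁ⁿ(0)`. -/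
theorem stmt_7 (n : ℕ) (hn : 2 ≤ n) (d : ℝ) (hd : d ∈ Set.Ico (0:ℝ) 1) :
    (∫ θ in (0:ℝ)..π, Real.sin θ ^ n *
        (d * Real.cos θ + Real.sqrt (1 - d ^ 2 * Real.sin θ ^ 2)) ^ (n + 1) /
          Real.sqrt (1 - d ^ 2 * Real.sin θ ^ 2))
      = ∫ θ in (0:ℝ)..π, Real.sin θ ^ n :=
  stmt_7_general n d hd
end

section
/- Let n ≥ 1 be an integer and d ∈ [0,1). Then V₃ⁿ(d) := ∫₀^π sinⁿ(θ)/( R_d(θ)^{n−1}·√(1 − d²·sin² θ) ) dθ ≥ ∫₀^π sinⁿ(θ) dθ = V₃ⁿ(0), with equality if and only if d = 0, where R_d(θ) = d·cos θ + √(1 − d²·sin² θ). -/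
/-!
Write `s(θ) = √(1 - d² sin² θ)`, so that `R_d(θ) = d cos θ + s(θ)`. Since `s(π - θ) = s(θ)`,
the reflection `θ ↦ π - θ` pairs `R_d(θ)` with `R_d(π - θ) = s(θ) - d cos θ`, and
`R_d(θ) R_d(π - θ) = s² - d² cos² θ = 1 - d² ≤ 1`. By AM–GM and `s ≤ 1`, the integrand `F` then
satisfies `F(θ) + F(π - θ) ≥ 2 sinⁿ θ`, so averaging the integral of `F` with that of its
reflection gives the inequality. At `θ = π/2` we have `s = √(1 - d²)`, which is `< 1` when `d ≠ 0`,
and there the pointwise inequality is strict.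
-/

open Real Set intervalIntegral MeasureTheory

lemma two_le_inv_add_inv {a b : ℝ} (ha : 0 < a) (hb : 0 < b) (hab : a * b ≤ 1) :
    2 ≤ a⁻¹ + b⁻¹ := by
  rw [inv_add_inv ha.ne' hb.ne', le_div_iff₀ (mul_pos ha hb)]
  nlinarith [sq_nonneg (a - b), mul_pos ha hb]

section Reflection

variable {f g : ℝ → ℝ} {a b : ℝ}

theorem integral_add_comp_reflect (hg : IntervalIntegrable g volume a b) :
    ∫ x in a..b, (g x + g (a + b - x)) = 2 * ∫ x in a..b, g x := by
  have hrefl : ∫ x in a..b, g (a + b - x) = ∫ x in a..b, g x := by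
    rw [integral_comp_sub_left]; ring_nf
  rw [integral_add hg (by simpa using (hg.comp_sub_left (a + b)).symm), hrefl]
  ring

theorem integral_le_of_two_mul_le_add_reflect (hab : a ≤ b) (hf : Continuous f)
    (hg : Continuous g) (h : ∀ x ∈ Icc a b, 2 * f x ≤ g x + g (a + b - x)) :
    ∫ x in a..b, f x ≤ ∫ x in a..b, g x := by
  have := integral_mono_on (μ := volume) hab (Continuous.intervalIntegrable (by fun_prop) a b)
    (Continuous.intervalIntegrable (by fun_prop) a b) h
  rw [intervalIntegral.integral_const_mul, integral_add_comp_reflect (hg.intervalIntegrable a b)]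
    at this
  linarith

theorem integral_lt_of_two_mul_le_add_reflect (hab : a < b) (hf : Continuous f)
    (hg : Continuous g) (hle : ∀ x ∈ Ioc a b, 2 * f x ≤ g x + g (a + b - x))
    (hlt : ∃ c ∈ Icc a b, 2 * f c < g c + g (a + b - c)) :
    ∫ x in a..b, f x < ∫ x in a..b, g x := by
  have := integral_lt_integral_of_continuousOn_of_le_of_exists_lt hab
    (by fun_prop) (by fun_prop) hle hlt
  rw [intervalIntegral.integral_const_mul, integral_add_comp_reflect (hg.intervalIntegrable a b)]
    at this
  linarith

end Reflection

noncomputable def offsetRoot (d θ : ℝ) : ℝ := √(1 - d ^ 2 * sin θ ^ 2)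

/-- `R_d(θ)`: the distance from a point at distance `d` from the centre of the unit circle to
the circle, along the ray making angle `θ` with the direction from the point to the centre. -/
noncomputable def offsetRadius (d θ : ℝ) : ℝ := d * cos θ + offsetRoot d θ

noncomputable def offsetIntegrand (d : ℝ) (n : ℕ) (θ : ℝ) : ℝ :=
  sin θ ^ n / (offsetRadius d θ ^ (n - 1) * offsetRoot d θ)

section Offset

variable {d : ℝ}

lemma offsetRoot_sq (hd : d ^ 2 ≤ 1) (θ : ℝ) : offsetRoot d θ ^ 2 = 1 - d ^ 2 * sin θ ^ 2 :=
  sq_sqrt (by nlinarith [sin_sq_le_one θ, sq_nonneg (sin θ)])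

lemma offsetRoot_pos (hd : d ^ 2 < 1) (θ : ℝ) : 0 < offsetRoot d θ :=
  sqrt_pos.2 (by nlinarith [sin_sq_le_one θ, sq_nonneg d])

lemma offsetRoot_le_one (d θ : ℝ) : offsetRoot d θ ≤ 1 :=
  sqrt_le_one.2 (by nlinarith [sq_nonneg (d * sin θ)])

lemma offsetRoot_pi_sub (d θ : ℝ) : offsetRoot d (π - θ) = offsetRoot d θ := by
  rw [offsetRoot, offsetRoot, sin_pi_sub]

lemma offsetRadius_pos (hd : d ^ 2 < 1) (θ : ℝ) : 0 < offsetRadius d θ := by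
  have hs := offsetRoot_pos hd θ
  have hsq := offsetRoot_sq hd.le θ
  have hdcos : (d * cos θ) ^ 2 < offsetRoot d θ ^ 2 := by
    nlinarith [sin_sq_add_cos_sq θ]
  have := abs_lt_of_sq_lt_sq hdcos hs.le
  rw [offsetRadius]
  linarith [abs_lt.1 this]

lemma offsetRadius_mul_offsetRadius_pi_sub (hd : d ^ 2 ≤ 1) (θ : ℝ) :
    offsetRadius d θ * offsetRadius d (π - θ) = 1 - d ^ 2 := by
  rw [offsetRadius, offsetRadius, offsetRoot_pi_sub, cos_pi_sub]
  nlinarith [offsetRoot_sq hd θ, sin_sq_add_cos_sq θ]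

lemma continuous_offsetIntegrand (hd : d ^ 2 < 1) (n : ℕ) : Continuous (offsetIntegrand d n) := by
  have hroot : Continuous (offsetRoot d) := by unfold offsetRoot; fun_prop
  have hradius : Continuous (offsetRadius d) := by unfold offsetRadius; fun_prop
  exact (continuous_sin.pow n).div (by fun_prop) fun θ ↦
    (mul_pos (pow_pos (offsetRadius_pos hd θ) _) (offsetRoot_pos hd θ)).ne'

lemma two_mul_sin_pow_le_offsetIntegrand_add (hd : d ^ 2 < 1) (n : ℕ) {θ : ℝ}
    (hθ : 0 ≤ sin θ) :
    2 * sin θ ^ n ≤ offsetIntegrand d n θ + offsetIntegrand d n (π - θ) := by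
  set s := offsetRoot d θ
  have hs := offsetRoot_pos hd θ
  have ha := mul_pos (pow_pos (offsetRadius_pos hd θ) (n - 1)) hs
  have hb := mul_pos (pow_pos (offsetRadius_pos hd (π - θ)) (n - 1)) hs
  have hab : (offsetRadius d θ ^ (n - 1) * s) * (offsetRadius d (π - θ) ^ (n - 1) * s) ≤ 1 :=
    calc _ = (offsetRadius d θ * offsetRadius d (π - θ)) ^ (n - 1) * s ^ 2 := by ring
      _ = (1 - d ^ 2) ^ (n - 1) * s ^ 2 := by rw [offsetRadius_mul_offsetRadius_pi_sub hd.le]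
      _ ≤ 1 := mul_le_one₀ (pow_le_one₀ (by linarith) (by nlinarith [sq_nonneg d]))
          (by positivity) (pow_le_one₀ hs.le (offsetRoot_le_one d θ))
  calc 2 * sin θ ^ n
      ≤ sin θ ^ n * ((offsetRadius d θ ^ (n - 1) * s)⁻¹
          + (offsetRadius d (π - θ) ^ (n - 1) * s)⁻¹) := by
        rw [mul_comm]
        exact mul_le_mul_of_nonneg_left (two_le_inv_add_inv ha hb hab) (pow_nonneg hθ n)
    _ = offsetIntegrand d n θ + offsetIntegrand d n (π - θ) := by
        rw [offsetIntegrand, offsetIntegrand, offsetRoot_pi_sub, sin_pi_sub]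
        ring

lemma one_lt_offsetIntegrand_pi_div_two (hd : d ^ 2 < 1) (hd0 : d ≠ 0) (n : ℕ) :
    1 < offsetIntegrand d n (π / 2) := by
  have hs := offsetRoot_pos hd (π / 2)
  have hs1 : offsetRoot d (π / 2) < 1 := by
    rw [offsetRoot, sin_pi_div_two]
    exact (sqrt_lt' one_pos).2 (by nlinarith [sq_pos_of_ne_zero hd0])
  rw [offsetIntegrand, offsetRadius, sin_pi_div_two, cos_pi_div_two, mul_zero, zero_add,
    one_pow, one_lt_div (by positivity)]
  calc offsetRoot d (π / 2) ^ (n - 1) * offsetRoot d (π / 2)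
      ≤ 1 * offsetRoot d (π / 2) := by gcongr; exact pow_le_one₀ hs.le hs1.le
    _ < 1 := by linarith

theorem integral_sin_pow_le_integral_offsetIntegrand (hd : d ^ 2 < 1) (n : ℕ) :
    ∫ θ in (0)..π, sin θ ^ n ≤ ∫ θ in (0)..π, offsetIntegrand d n θ :=
  integral_le_of_two_mul_le_add_reflect pi_nonneg (by fun_prop)
    (continuous_offsetIntegrand hd n) fun θ hθ ↦ by
      simpa using two_mul_sin_pow_le_offsetIntegrand_add hd n (sin_nonneg_of_mem_Icc hθ)

theorem integral_sin_pow_lt_integral_offsetIntegrand (hd : d ^ 2 < 1) (hd0 : d ≠ 0) (n : ℕ) :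
    ∫ θ in (0)..π, sin θ ^ n < ∫ θ in (0)..π, offsetIntegrand d n θ := by
  refine integral_lt_of_two_mul_le_add_reflect pi_pos (by fun_prop)
    (continuous_offsetIntegrand hd n) (fun θ hθ ↦ ?_)
    ⟨π / 2, ⟨by positivity, by linarith [pi_pos]⟩, ?_⟩
  · simpa using two_mul_sin_pow_le_offsetIntegrand_add hd n
      (sin_nonneg_of_mem_Icc (Ioc_subset_Icc_self hθ))
  · have := one_lt_offsetIntegrand_pi_div_two hd hd0 n
    rw [zero_add, show π - π / 2 = π / 2 by ring, sin_pi_div_two, one_pow]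
    linarith

end Offset

theorem stmt_9_general (n : ℕ) (d : ℝ) (hd : d ∈ Set.Ico (0:ℝ) 1) :
    (∫ θ in (0:ℝ)..π, Real.sin θ ^ n)
      ≤ (∫ θ in (0:ℝ)..π, Real.sin θ ^ n /
          ((d * Real.cos θ + Real.sqrt (1 - d ^ 2 * Real.sin θ ^ 2)) ^ (n - 1) *
            Real.sqrt (1 - d ^ 2 * Real.sin θ ^ 2))) ∧
    ((∫ θ in (0:ℝ)..π, Real.sin θ ^ n /
          ((d * Real.cos θ + Real.sqrt (1 - d ^ 2 * Real.sin θ ^ 2)) ^ (n - 1) *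
            Real.sqrt (1 - d ^ 2 * Real.sin θ ^ 2)))
        = (∫ θ in (0:ℝ)..π, Real.sin θ ^ n) ↔ d = 0) := by
  have hd2 : d ^ 2 < 1 := by nlinarith [hd.1, hd.2]
  change _ ≤ ∫ θ in (0)..π, offsetIntegrand d n θ ∧
    ((∫ θ in (0)..π, offsetIntegrand d n θ) = _ ↔ d = 0)
  refine ⟨integral_sin_pow_le_integral_offsetIntegrand hd2 n, fun heq ↦ ?_, ?_⟩
  · by_contra hd0
    exact (integral_sin_pow_lt_integral_offsetIntegrand hd2 hd0 n).ne' heq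
  · rintro rfl
    simp [offsetIntegrand, offsetRadius, offsetRoot]

/-- For `n ≥ 1` and `d ∈ [0,1)`, with `R_d(θ) = d·cos θ + √(1 − d²·sin² θ)`,
`V₃ⁿ(d) = ∫₀^π sinⁿθ/(R_d(θ)^{n−1}·√(1 − d²·sin² θ)) dθ ≥ ∫₀^π sinⁿθ dθ = V₃ⁿ(0)`,
with equality if and only if `d = 0`. -/
theorem stmt_9 (n : ℕ) (hn : 1 ≤ n) (d : ℝ) (hd : d ∈ Set.Ico (0:ℝ) 1) :
    (∫ θ in (0:ℝ)..π, Real.sin θ ^ n)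
      ≤ (∫ θ in (0:ℝ)..π, Real.sin θ ^ n /
          ((d * Real.cos θ + Real.sqrt (1 - d ^ 2 * Real.sin θ ^ 2)) ^ (n - 1) *
            Real.sqrt (1 - d ^ 2 * Real.sin θ ^ 2))) ∧
    ((∫ θ in (0:ℝ)..π, Real.sin θ ^ n /
          ((d * Real.cos θ + Real.sqrt (1 - d ^ 2 * Real.sin θ ^ 2)) ^ (n - 1) *
            Real.sqrt (1 - d ^ 2 * Real.sin θ ^ 2)))
        = (∫ θ in (0:ℝ)..π, Real.sin θ ^ n) ↔ d = 0) :=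
  stmt_9_general n d hd
end

section
/- Let n ≥ 2 be an integer. The function H : [0,1) → ℝ defined by H(d) = ∫₀^π sinⁿ(θ)/(1 + d·cos θ)^{n−1} dθ is strictly increasing; in particular H(d) > H(0) = ∫₀^π sinⁿ(θ) dθ for every d ∈ (0,1). -/
/-!
Folding `[0, π]` at `π/2` with `θ ↦ π - θ` writes the integral as
`∫₀^{π/2} sinⁿθ · φ(d cos θ)` with `φ(x) = (1 + x)^{-m} + (1 - x)^{-m}`, `m = n - 1`.
Since `φ(x) = ((1 - x)^m + (1 + x)^m) / (1 - x²)^m`, where the numerator is increasing on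
`[0, ∞)` (only even powers of `x` survive in it) and the denominator is decreasing on `[0, 1)`,
`φ` is strictly increasing on `[0, 1)`; and `d cos θ` increases with `d` since `cos θ ≥ 0`.
-/

open Real Set MeasureTheory

theorem monotoneOn_one_sub_pow_add_one_add_pow (m : ℕ) :
    MonotoneOn (fun x : ℝ => (1 - x) ^ m + (1 + x) ^ m) (Ici 0) := by
  intro s hs t _ hst
  have expand : ∀ x : ℝ, (1 - x) ^ m + (1 + x) ^ m
      = ∑ k ∈ Finset.range (m + 1), ((-x) ^ k + x ^ k) * (m.choose k : ℝ) := by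
    intro x
    rw [sub_eq_neg_add, add_comm 1 x, add_pow, add_pow, ← Finset.sum_add_distrib]
    exact Finset.sum_congr rfl fun k _ => by ring
  simp only [expand]
  refine Finset.sum_le_sum fun k _ => mul_le_mul_of_nonneg_right ?_ (Nat.cast_nonneg _)
  rcases Nat.even_or_odd k with hk | hk
  · simp only [hk.neg_pow]
    gcongr
  · simp [hk.neg_pow]

theorem strictMonoOn_inv_one_add_pow_add_inv_one_sub_pow {m : ℕ} (hm : m ≠ 0) :
    StrictMonoOn (fun x : ℝ => ((1 + x) ^ m)⁻¹ + ((1 - x) ^ m)⁻¹) (Ico 0 1) := by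
  have as_quotient : ∀ x ∈ Ico (0 : ℝ) 1, ((1 + x) ^ m)⁻¹ + ((1 - x) ^ m)⁻¹
      = ((1 - x) ^ m + (1 + x) ^ m) / (1 - x ^ 2) ^ m := by
    intro x hx
    have : (1 - x : ℝ) ≠ 0 := by linarith [hx.2]
    have : (1 + x : ℝ) ≠ 0 := by linarith [hx.1]
    rw [show 1 - x ^ 2 = (1 + x) * (1 - x) by ring, mul_pow]
    field_simp
  intro s hs t ht hst
  simp only [as_quotient s hs, as_quotient t ht]
  have hden_t : 0 < (1 - t ^ 2) ^ m := pow_pos (by nlinarith [ht.1, ht.2]) m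
  have hden_lt : (1 - t ^ 2) ^ m < (1 - s ^ 2) ^ m :=
    pow_lt_pow_left₀ (by nlinarith [hs.1]) (by nlinarith [hs.1, ht.2]) hm
  have hnum_pos : 0 < (1 - s) ^ m + (1 + s) ^ m := by
    have : 0 < 1 - s := by linarith [hs.2]
    have := hs.1
    positivity
  calc ((1 - s) ^ m + (1 + s) ^ m) / (1 - s ^ 2) ^ m
      < ((1 - s) ^ m + (1 + s) ^ m) / (1 - t ^ 2) ^ m :=
        div_lt_div_of_pos_left hnum_pos hden_t hden_lt
    _ ≤ ((1 - t) ^ m + (1 + t) ^ m) / (1 - t ^ 2) ^ m :=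
        div_le_div_of_nonneg_right
          (monotoneOn_one_sub_pow_add_one_add_pow m hs.1 (hs.1.trans hst.le) hst.le) hden_t.le

theorem intervalIntegral.integral_eq_integral_add_comp_sub {f : ℝ → ℝ} {a b : ℝ}
    (hf : IntervalIntegrable f volume a b) :
    ∫ x in a..b, f x = ∫ x in a..(a + b) / 2, (f x + f (a + b - x)) := by
  have hmid : (a + b) / 2 ∈ uIcc a b := by
    rcases le_total a b with h | h
    · exact mem_uIcc_of_le (by linarith) (by linarith)
    · exact mem_uIcc_of_ge (by linarith) (by linarith)
  have hleft := hf.mono_set (uIcc_subset_uIcc left_mem_uIcc hmid)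
  have hright := hf.mono_set (uIcc_subset_uIcc hmid right_mem_uIcc)
  have hreflect : ∫ x in a..(a + b) / 2, f (a + b - x) = ∫ x in (a + b) / 2..b, f x := by
    rw [intervalIntegral.integral_comp_sub_left f (a + b)]
    congr 1 <;> ring
  have hreflect_int : IntervalIntegrable (fun x => f (a + b - x)) volume a ((a + b) / 2) := by
    have := (hright.comp_sub_left (a + b)).symm
    convert this using 1 <;> ring
  rw [intervalIntegral.integral_add hleft hreflect_int, hreflect,
    intervalIntegral.integral_add_adjacent_intervals hleft hright]

theorem abs_mul_cos_lt_one {d : ℝ} (hd : |d| < 1) (θ : ℝ) : |d * cos θ| < 1 := by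
  rw [abs_mul]
  exact (mul_le_of_le_one_right (abs_nonneg d) (abs_cos_le_one θ)).trans_lt hd

theorem continuous_sin_pow_div_one_add_mul_cos_pow (n m : ℕ) {d : ℝ} (hd : |d| < 1) :
    Continuous fun θ => sin θ ^ n / (1 + d * cos θ) ^ m := by
  refine Continuous.div (by fun_prop) (by fun_prop) fun θ => pow_ne_zero m ?_
  linarith [neg_abs_le (d * cos θ), abs_mul_cos_lt_one hd θ]

theorem integral_sin_pow_div_one_add_mul_cos_pow_eq (n m : ℕ) {d : ℝ} (hd : |d| < 1) :
    ∫ θ in 0..π, sin θ ^ n / (1 + d * cos θ) ^ m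
      = ∫ θ in 0..π / 2, sin θ ^ n * (((1 + d * cos θ) ^ m)⁻¹ + ((1 - d * cos θ) ^ m)⁻¹) := by
  rw [intervalIntegral.integral_eq_integral_add_comp_sub
    ((continuous_sin_pow_div_one_add_mul_cos_pow n m hd).intervalIntegrable 0 π), zero_add]
  refine intervalIntegral.integral_congr fun θ _ => ?_
  simp only [sin_pi_sub, cos_pi_sub, mul_neg, ← sub_eq_add_neg]
  ring

theorem strictMonoOn_integral_sin_pow_div_one_add_mul_cos_pow (n : ℕ) {m : ℕ} (hm : m ≠ 0) :
    StrictMonoOn (fun d : ℝ => ∫ θ in 0..π, sin θ ^ n / (1 + d * cos θ) ^ m) (Ico 0 1) := by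
  have habs : ∀ d ∈ Ico (0 : ℝ) 1, |d| < 1 := fun d hd => by rw [abs_of_nonneg hd.1]; exact hd.2
  have hcos : ∀ θ ∈ Icc 0 (π / 2), 0 ≤ cos θ := fun θ hθ =>
    cos_nonneg_of_mem_Icc ⟨by linarith [hθ.1, pi_pos], hθ.2⟩
  have hmem : ∀ d ∈ Ico (0 : ℝ) 1, ∀ θ ∈ Icc 0 (π / 2), d * cos θ ∈ Ico 0 1 := fun d hd θ hθ =>
    ⟨mul_nonneg hd.1 (hcos θ hθ),
      (le_abs_self _).trans_lt (abs_mul_cos_lt_one (habs d hd) θ)⟩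
  have hcont : ∀ d ∈ Ico (0 : ℝ) 1, ContinuousOn (fun θ =>
      sin θ ^ n * (((1 + d * cos θ) ^ m)⁻¹ + ((1 - d * cos θ) ^ m)⁻¹)) (Icc 0 (π / 2)) :=
    fun d hd => (by fun_prop : Continuous fun θ => sin θ ^ n).continuousOn.mul <|
      .add (.inv₀ (by fun_prop) fun θ hθ => by have := (hmem d hd θ hθ).1; positivity)
        (.inv₀ (by fun_prop) fun θ hθ => pow_ne_zero m (by linarith [(hmem d hd θ hθ).2]))
  have hφ := strictMonoOn_inv_one_add_pow_add_inv_one_sub_pow hm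
  intro d₁ hd₁ d₂ hd₂ hlt
  simp only [integral_sin_pow_div_one_add_mul_cos_pow_eq n m (habs _ hd₁),
    integral_sin_pow_div_one_add_mul_cos_pow_eq n m (habs _ hd₂)]
  refine intervalIntegral.integral_lt_integral_of_continuousOn_of_le_of_exists_lt
    (by positivity) (hcont d₁ hd₁) (hcont d₂ hd₂) (fun θ hθ => ?_) ⟨π / 4, ?_, ?_⟩
  · have hθ' : θ ∈ Icc 0 (π / 2) := Ioc_subset_Icc_self hθ
    have hsin : 0 ≤ sin θ := sin_nonneg_of_nonneg_of_le_pi hθ'.1 (by linarith [hθ'.2, pi_pos])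
    exact mul_le_mul_of_nonneg_left (hφ.monotoneOn (hmem d₁ hd₁ θ hθ') (hmem d₂ hd₂ θ hθ')
      (mul_le_mul_of_nonneg_right hlt.le (hcos θ hθ'))) (pow_nonneg hsin n)
  · constructor <;> linarith [pi_pos]
  · have hθ : π / 4 ∈ Icc 0 (π / 2) := ⟨by positivity, by linarith [pi_pos]⟩
    refine mul_lt_mul_of_pos_left (hφ (hmem d₁ hd₁ _ hθ) (hmem d₂ hd₂ _ hθ)
      (mul_lt_mul_of_pos_right hlt ?_)) (pow_pos ?_ n)
    · rw [cos_pi_div_four]; positivity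
    · rw [sin_pi_div_four]; positivity

/-- For `n ≥ 2`, the function `H(d) = ∫₀^π sinⁿθ/(1 + d·cos θ)^{n−1} dθ` is strictly
increasing on `[0,1)`; in particular `H(d) > H(0) = ∫₀^π sinⁿθ dθ` for `d ∈ (0,1)`. -/
theorem stmt_10 (n : ℕ) (hn : 2 ≤ n) :
    StrictMonoOn (fun d : ℝ => ∫ θ in (0:ℝ)..π,
        Real.sin θ ^ n / (1 + d * Real.cos θ) ^ (n - 1)) (Set.Ico (0:ℝ) 1) ∧
    ∀ d ∈ Set.Ioo (0:ℝ) 1,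
      (∫ θ in (0:ℝ)..π, Real.sin θ ^ n) <
        ∫ θ in (0:ℝ)..π, Real.sin θ ^ n / (1 + d * Real.cos θ) ^ (n - 1) := by
  have hmono := strictMonoOn_integral_sin_pow_div_one_add_mul_cos_pow n (m := n - 1) (by omega)
  refine ⟨hmono, fun d hd => ?_⟩
  simpa using hmono ⟨le_rfl, zero_lt_one⟩ (Ioo_subset_Ico_self hd) hd.1
end

section
/- Let I_p = ∫₀^π sin^p(t) dt for p ∈ ℕ. Then for every x ∈ (0,1), the series ∑_{n=1}^∞ (1/n)·I_{2n}·x^{2n} converges and ∑_{n=1}^∞ (1/n)·I_{2n}·x^{2n} = −2π·ln( (√(1 − x²) + 1)/2 ). -/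
/-! Expanding `(1 - u² sin² t)⁻¹` as a geometric series and integrating over `[0, π]` gives the
generating function `∑ I₂ₙ u²ⁿ = π / √(1 - u²)`, because `∫₀^π (cos² t + c² sin² t)⁻¹ dt = π / c`.
Dropping the `n = 0` term, dividing by `u` and integrating from `0` to `x` turns `2 I₂ₙ u²ⁿ⁻¹`
into `I₂ₙ x²ⁿ / n`, while `2π (1 / √(1 - u²) - 1) / u` integrates to
`-2π log ((√(1 - x²) + 1) / 2)`. Both exchanges of sum and integral are dominated by geometric
series. -/

open Real Set intervalIntegral
open scoped Interval

theorem hasSum_intervalIntegral_of_summable_bound {E : Type*} [NormedAddCommGroup E]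
    [NormedSpace ℝ E] {F : ℕ → ℝ → E} {f : ℝ → E} {a b : ℝ} {C : ℕ → ℝ}
    (hF : ∀ n, Continuous (F n)) (hC : Summable C) (h_bound : ∀ n, ∀ t ∈ Ι a b, ‖F n t‖ ≤ C n)
    (h_lim : ∀ t ∈ Ι a b, HasSum (fun n => F n t) (f t)) :
    HasSum (fun n => ∫ t in a..b, F n t) (∫ t in a..b, f t) :=
  hasSum_integral_of_dominated_convergence (fun n _ => C n)
    (fun n => (hF n).aestronglyMeasurable) (fun n => .of_forall (h_bound n))
    (.of_forall fun _ _ => hC) intervalIntegrable_const (.of_forall h_lim)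

theorem cos_sq_add_mul_sin_sq_pos {c : ℝ} (hc : 0 < c) (t : ℝ) :
    0 < cos t ^ 2 + c * sin t ^ 2 := by
  nlinarith [sin_sq_add_cos_sq t, mul_nonneg hc.le (sq_nonneg (sin t)), sq_nonneg (cos t)]

/- Up to multiples of `π / c` this is `arctan (c * tan t) / c`; the subtraction formula for
`arctan` turns `arctan (c * tan t) - t` into the arctangent of a function that is smooth on `ℝ`. -/
theorem hasDerivAt_inv_cos_sq_add_sq_mul_sin_sq_primitive {c : ℝ} (hc : 0 < c) (t : ℝ) :
    HasDerivAt (fun t => (t + arctan ((c - 1) * sin t * cos t / (cos t ^ 2 + c * sin t ^ 2))) / c)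
      (cos t ^ 2 + c ^ 2 * sin t ^ 2)⁻¹ t := by
  have hN : HasDerivAt (fun t => (c - 1) * sin t * cos t) ((c - 1) * (cos t ^ 2 - sin t ^ 2)) t :=
    (((hasDerivAt_sin t).const_mul (c - 1)).mul (hasDerivAt_cos t)).congr_deriv (by ring)
  have hD : HasDerivAt (fun t => cos t ^ 2 + c * sin t ^ 2) (2 * (c - 1) * sin t * cos t) t :=
    (((hasDerivAt_cos t).pow 2).add (((hasDerivAt_sin t).pow 2).const_mul c)).congr_deriv
      (by simp only [Nat.cast_ofNat]; ring)
  refine (((hasDerivAt_id t).add (hN.div hD (cos_sq_add_mul_sin_sq_pos hc t).ne').arctan).div_const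
    c).congr_deriv ?_
  have := cos_sq_add_mul_sin_sq_pos hc t
  have := cos_sq_add_mul_sin_sq_pos (pow_pos hc 2) t
  have := sin_sq_add_cos_sq t
  simp only [Pi.div_apply]
  field_simp
  grind

theorem integral_inv_cos_sq_add_sq_mul_sin_sq {c : ℝ} (hc : 0 < c) :
    ∫ t in 0..π, (cos t ^ 2 + c ^ 2 * sin t ^ 2)⁻¹ = π / c := by
  have hcont : Continuous fun t => (cos t ^ 2 + c ^ 2 * sin t ^ 2)⁻¹ :=
    (by fun_prop : Continuous _).inv₀ fun t => (cos_sq_add_mul_sin_sq_pos (pow_pos hc 2) t).ne'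
  rw [integral_eq_sub_of_hasDerivAt
    (fun t _ => hasDerivAt_inv_cos_sq_add_sq_mul_sin_sq_primitive hc t)
    (hcont.intervalIntegrable _ _)]
  simp

theorem abs_integral_sin_pow_le (n : ℕ) : |∫ t in 0..π, sin t ^ n| ≤ π := by
  simpa [abs_of_pos pi_pos] using norm_integral_le_of_norm_le_const (a := 0) (b := π) (C := 1)
    (f := fun t => sin t ^ n) fun t _ => by
      simpa using pow_le_one₀ (abs_nonneg _) (abs_sin_le_one t)

theorem abs_le_abs_of_mem_uIcc_zero {x u : ℝ} (hu : u ∈ [[0, x]]) : |u| ≤ |x| := by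
  simpa using abs_sub_left_of_mem_uIcc hu

theorem sqrt_one_sub_sq_pos {u : ℝ} (hu : |u| < 1) : 0 < √(1 - u ^ 2) :=
  sqrt_pos.2 (sub_pos.2 ((sq_lt_one_iff_abs_lt_one u).2 hu))

theorem hasSum_integral_sin_pow_two_mul_mul_pow {u : ℝ} (hu : |u| < 1) :
    HasSum (fun n : ℕ => (∫ t in 0..π, sin t ^ (2 * n)) * u ^ (2 * n)) (π / √(1 - u ^ 2)) := by
  have hu2 : u ^ 2 < 1 := (sq_lt_one_iff_abs_lt_one u).2 hu
  rw [← integral_inv_cos_sq_add_sq_mul_sin_sq (sqrt_one_sub_sq_pos hu), sq_sqrt (by linarith)]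
  simp_rw [← integral_mul_const]
  refine hasSum_intervalIntegral_of_summable_bound (C := fun n => (u ^ 2) ^ n)
    (fun n => by fun_prop) (summable_geometric_of_lt_one (sq_nonneg u) hu2)
    (fun n t _ => ?_) (fun t _ => ?_)
  · rw [norm_mul, norm_pow, norm_pow, norm_eq_abs, norm_eq_abs, pow_mul |u|, sq_abs]
    exact mul_le_of_le_one_left (by positivity) (pow_le_one₀ (abs_nonneg _) (abs_sin_le_one t))
  · have hr : u ^ 2 * sin t ^ 2 < 1 := by
      nlinarith [sin_sq_le_one t, sq_nonneg (sin t)]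
    rw [show cos t ^ 2 + (1 - u ^ 2) * sin t ^ 2 = 1 - u ^ 2 * sin t ^ 2 by
      linear_combination sin_sq_add_cos_sq t]
    refine (hasSum_geometric_of_lt_one (by positivity) hr).congr_fun fun n => ?_
    rw [pow_mul, pow_mul, mul_pow, mul_comm]

theorem hasSum_two_mul_integral_sin_pow_mul_pow_odd {u : ℝ} (hu : |u| < 1) :
    HasSum (fun n : ℕ => 2 * (∫ t in 0..π, sin t ^ (2 * (n + 1))) * u ^ (2 * n + 1))
      (2 * π * u / (√(1 - u ^ 2) * (√(1 - u ^ 2) + 1))) := by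
  rcases eq_or_ne u 0 with rfl | hu0
  · simp [hasSum_zero]
  have hs := sqrt_one_sub_sq_pos hu
  have hs2 : √(1 - u ^ 2) ^ 2 = 1 - u ^ 2 :=
    sq_sqrt (sub_pos.2 ((sq_lt_one_iff_abs_lt_one u).2 hu)).le
  have htail := ((hasSum_nat_add_iff' 1).2 (hasSum_integral_sin_pow_two_mul_mul_pow hu)).mul_left
    (2 / u)
  have hval : 2 / u * (π / √(1 - u ^ 2) - π) =
      2 * π * u / (√(1 - u ^ 2) * (√(1 - u ^ 2) + 1)) := by
    field_simp
    linear_combination -hs2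
  simp only [Finset.sum_range_one, mul_zero, pow_zero, integral_one, sub_zero, mul_one, hval]
    at htail
  refine htail.congr_fun fun n => ?_
  field_simp
  ring

theorem hasDerivAt_log_sqrt_one_sub_sq_add_one_div_two {u : ℝ} (hu : |u| < 1) :
    HasDerivAt (fun u => log ((√(1 - u ^ 2) + 1) / 2))
      (-(u / (√(1 - u ^ 2) * (√(1 - u ^ 2) + 1)))) u := by
  have h1u : 0 < 1 - u ^ 2 := sub_pos.2 ((sq_lt_one_iff_abs_lt_one u).2 hu)
  have hs := sqrt_one_sub_sq_pos hu
  have hsqrt : HasDerivAt (fun u => √(1 - u ^ 2)) (-(2 * u) / (2 * √(1 - u ^ 2))) u :=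
    (((hasDerivAt_pow 2 u).const_sub 1).congr_deriv (by simp)).sqrt h1u.ne'
  refine (((hsqrt.add_const 1).div_const 2).log (by positivity)).congr_deriv ?_
  field_simp

theorem integral_div_sqrt_one_sub_sq_mul_sqrt_one_sub_sq_add_one {x : ℝ} (hx : |x| < 1) :
    ∫ u in 0..x, u / (√(1 - u ^ 2) * (√(1 - u ^ 2) + 1)) = -log ((√(1 - x ^ 2) + 1) / 2) := by
  have hmem : ∀ u ∈ [[0, x]], |u| < 1 := fun u hu => (abs_le_abs_of_mem_uIcc_zero hu).trans_lt hx
  have hcont : ContinuousOn (fun u => u / (√(1 - u ^ 2) * (√(1 - u ^ 2) + 1))) [[0, x]] :=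
    ContinuousOn.div (by fun_prop) (by fun_prop) fun u hu => by
      have := sqrt_one_sub_sq_pos (hmem u hu)
      positivity
  have := integral_eq_sub_of_hasDerivAt (fun u hu =>
      (hasDerivAt_log_sqrt_one_sub_sq_add_one_div_two (hmem u hu)).neg.congr_deriv (neg_neg _))
    hcont.intervalIntegrable
  simpa using this

theorem hasSum_integral_sin_pow_mul_pow_div {x : ℝ} (hx : |x| < 1) :
    HasSum (fun n : ℕ => (∫ t in 0..π, sin t ^ (2 * (n + 1))) * x ^ (2 * (n + 1)) / (n + 1))
      (-(2 * π * log ((√(1 - x ^ 2) + 1) / 2))) := by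
  have hterm : ∀ n : ℕ, ∫ u in 0..x, 2 * (∫ t in 0..π, sin t ^ (2 * (n + 1))) * u ^ (2 * n + 1) =
      (∫ t in 0..π, sin t ^ (2 * (n + 1))) * x ^ (2 * (n + 1)) / (n + 1) := fun n => by
    rw [integral_const_mul, integral_pow]
    push_cast
    field_simp
    ring_nf
  have hsum : ∫ u in 0..x, 2 * π * u / (√(1 - u ^ 2) * (√(1 - u ^ 2) + 1)) =
      -(2 * π * log ((√(1 - x ^ 2) + 1) / 2)) := by
    simp_rw [mul_div_assoc, integral_const_mul,
      integral_div_sqrt_one_sub_sq_mul_sqrt_one_sub_sq_add_one hx, mul_neg]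
  simp_rw [← hterm, ← hsum]
  refine hasSum_intervalIntegral_of_summable_bound (C := fun n => 2 * π * (x ^ 2) ^ n)
    (fun n => by fun_prop)
    ((summable_geometric_of_lt_one (sq_nonneg x) ((sq_lt_one_iff_abs_lt_one x).2 hx)).mul_left _)
    (fun n u hu => ?_) (fun u hu => ?_)
  · have hux := abs_le_abs_of_mem_uIcc_zero (uIoc_subset_uIcc hu)
    have hpow : |u| ^ (2 * n + 1) ≤ (x ^ 2) ^ n := calc
      |u| ^ (2 * n + 1) ≤ |x| ^ (2 * n + 1) := by gcongr
      _ ≤ |x| ^ (2 * n) := pow_le_pow_of_le_one (abs_nonneg x) hx.le (by omega)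
      _ = (x ^ 2) ^ n := by rw [pow_mul, sq_abs]
    rw [norm_mul, norm_mul, norm_pow, norm_eq_abs, norm_eq_abs, norm_eq_abs, abs_two]
    exact mul_le_mul (mul_le_mul_of_nonneg_left (abs_integral_sin_pow_le _) two_pos.le) hpow
      (by positivity) (by positivity)
  · exact hasSum_two_mul_integral_sin_pow_mul_pow_odd
      ((abs_le_abs_of_mem_uIcc_zero (uIoc_subset_uIcc hu)).trans_lt hx)

/-- With `I_p = ∫₀^π sin^p(t) dt`, for every `x ∈ (0,1)` the series
`∑_{n≥1} (1/n)·I_{2n}·x^{2n}` converges with sum `−2π·ln((√(1 − x²) + 1)/2)`.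
(The `n = 0` term of the summand below vanishes since `1/0 = 0` in `ℝ`.) -/
theorem stmt_13 (x : ℝ) (hx : x ∈ Set.Ioo (0:ℝ) 1) :
    HasSum (fun n : ℕ =>
        (1 / (n : ℝ)) * (∫ t in (0:ℝ)..π, Real.sin t ^ (2 * n)) * x ^ (2 * n))
      (-(2 * π * Real.log ((Real.sqrt (1 - x ^ 2) + 1) / 2))) := by
  have hx1 : |x| < 1 := abs_lt.2 ⟨by linarith [hx.1], hx.2⟩
  rw [← hasSum_nat_add_iff' 1, Finset.sum_range_one, Nat.cast_zero, div_zero, zero_mul, zero_mul,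
    sub_zero]
  refine (hasSum_integral_sin_pow_mul_pow_div hx1).congr_fun fun n => ?_
  push_cast
  ring
end

section
/- For every d ∈ (0,1), with I_p = ∫₀^π sin^p(t) dt, one has ∑_{n=1}^∞ (1/n)·I_{2n}·(2d/(1+d²))^{2n} = 2π·ln(1 + d²). -/
/-!
By Wallis, `I_{2n} = π w_n` with `w_n = ∏_{i<n} (2i+1)/(2i+2) = (-1)ⁿ (-1/2 choose n)`, so the
binomial series gives `∑ w_n zⁿ = (1 - z)^(-1/2)` for `|z| < 1`. Differentiating
`S(z) = ∑ w_n zⁿ / n` termwise, `z S'(z) = (1 - z)^(-1/2) - 1`, which is also `z` times the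
derivative of `2 log (2 / (1 + √(1 - z)))`; both functions vanish at `0`, so they agree on
`(-1, 1)`. At `z = (2d/(1+d²))²` one has `√(1 - z) = (1-d²)/(1+d²)`, hence
`2 / (1 + √(1 - z)) = 1 + d²`.
-/

open Real Finset

theorem Ring.natCast_succ_mul_choose_succ {R : Type*} [CommRing R] [BinomialRing R]
    (r : R) (n : ℕ) : ((n : R) + 1) * Ring.choose r (n + 1) = Ring.choose r n * (r - n) := by
  have h := Ring.choose_smul_choose r (Nat.le_succ n)
  rwa [Nat.choose_succ_self_right, Nat.succ_eq_add_one, Nat.add_sub_cancel_left,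
    Ring.choose_one_right, nsmul_eq_mul, Nat.cast_succ] at h

lemma abs_div_natCast_le (x : ℝ) (n : ℕ) : |x / n| ≤ |x| := by
  rcases n.eq_zero_or_pos with rfl | hn
  · simp
  · rw [abs_div, Nat.abs_cast]
    exact div_le_self (abs_nonneg x) (by exact_mod_cast hn)

section PowerSeries

variable {a : ℕ → ℝ} {C z : ℝ}

lemma summable_mul_pow_of_abs_le (ha : ∀ n, |a n| ≤ C) (hz : |z| < 1) :
    Summable fun n : ℕ => a n * z ^ n :=
  ((summable_geometric_of_lt_one (abs_nonneg z) hz).mul_left C).of_norm_bounded fun n => by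
    rw [Real.norm_eq_abs, abs_mul, abs_pow]
    exact mul_le_mul_of_nonneg_right (ha n) (by positivity)

lemma hasDerivAt_tsum_div_mul_pow (ha : ∀ n, |a n| ≤ C) (hz : |z| < 1) :
    HasDerivAt (fun w => ∑' n : ℕ, a n / n * w ^ n) (∑' n : ℕ, a (n + 1) * z ^ n) z := by
  obtain ⟨r, hzr, hr⟩ := exists_between hz
  have hr0 : 0 ≤ r := (abs_nonneg z).trans hzr.le
  have hu : Summable fun n : ℕ => C * r ^ (n - 1) :=
    (summable_nat_add_iff 1).1 (by simpa using (summable_geometric_of_lt_one hr0 hr).mul_left C)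
  have hbound : ∀ n y, y ∈ Set.Ioo (-r) r →
      ‖a n / n * (n * y ^ (n - 1))‖ ≤ C * r ^ (n - 1) := by
    intro n y hy
    rcases n.eq_zero_or_pos with rfl | hn
    · simpa using (abs_nonneg (a 0)).trans (ha 0)
    · have hn' : (n : ℝ) ≠ 0 := by positivity
      rw [show a n / n * (n * y ^ (n - 1)) = a n * y ^ (n - 1) by field_simp, Real.norm_eq_abs,
        abs_mul, abs_pow]
      exact mul_le_mul (ha n) (pow_le_pow_left₀ (abs_nonneg y) (abs_lt.2 hy).le _)
        (by positivity) ((abs_nonneg _).trans (ha n))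
  have hzmem : z ∈ Set.Ioo (-r) r := ⟨neg_lt_of_abs_lt hzr, lt_of_abs_lt hzr⟩
  have hderiv := hasDerivAt_tsum_of_isPreconnected hu isOpen_Ioo isPreconnected_Ioo
    (fun n y _ => (hasDerivAt_pow n y).const_mul (a n / n)) hbound hzmem
    (summable_mul_pow_of_abs_le (fun n => (abs_div_natCast_le _ n).trans (ha n)) hz) hzmem
  have hshift : (fun n : ℕ => a (n + 1) / ↑(n + 1) * (↑(n + 1) * z ^ (n + 1 - 1))) =
      fun n => a (n + 1) * z ^ n := by
    funext n
    rw [Nat.add_sub_cancel]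
    field_simp
  refine hderiv.congr_deriv ?_
  rw [tsum_eq_zero_add' (hshift ▸ summable_mul_pow_of_abs_le (fun n => ha (n + 1)) hz), hshift]
  simp

end PowerSeries

lemma hasDerivAt_two_mul_log_two_div_one_add_sqrt {z : ℝ} (hz : z < 1) :
    HasDerivAt (fun w => 2 * log (2 / (1 + √(1 - w)))) (√(1 - z) * (1 + √(1 - z)))⁻¹ z := by
  have hpos : 0 < 1 + √(1 - z) := by positivity
  have h := (((hasDerivAt_id' z).const_sub 1).sqrt (by linarith)).const_add 1
  have h2 := (((h.inv hpos.ne').const_mul 2).log (by simp [hpos.ne'])).const_mul 2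
  simp only [Pi.inv_apply, ← div_eq_mul_inv] at h2
  refine h2.congr_deriv ?_
  field_simp

noncomputable def wallisCoeff (n : ℕ) : ℝ := ∏ i ∈ range n, (2 * (i : ℝ) + 1) / (2 * i + 2)

lemma integral_sin_pow_two_mul (n : ℕ) :
    ∫ t in (0 : ℝ)..π, Real.sin t ^ (2 * n) = π * wallisCoeff n :=
  integral_sin_pow_even n

lemma wallisCoeff_zero : wallisCoeff 0 = 1 := prod_range_zero _

lemma wallisCoeff_one : wallisCoeff 1 = 1 / 2 := by norm_num [wallisCoeff]

lemma wallisCoeff_succ (n : ℕ) :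
    wallisCoeff (n + 1) = wallisCoeff n * ((2 * n + 1) / (2 * n + 2)) :=
  prod_range_succ _ _

lemma abs_wallisCoeff_le_one (n : ℕ) : |wallisCoeff n| ≤ 1 := by
  rw [abs_of_nonneg (prod_nonneg fun i _ => by positivity)]
  exact prod_le_one (fun i _ => by positivity) fun i _ =>
    (div_le_one (by positivity)).2 (by linarith)

lemma neg_one_pow_mul_choose_neg_half (n : ℕ) :
    (-1) ^ n * Ring.choose (-(1 / 2) : ℝ) n = wallisCoeff n := by
  induction n with
  | zero => simp [wallisCoeff_zero]
  | succ n ih =>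
    have h := Ring.natCast_succ_mul_choose_succ (-(1 / 2) : ℝ) n
    rw [wallisCoeff_succ, ← ih]
    field_simp
    linear_combination -2 * (-1) ^ n * h

lemma choose_half_add_sub_one_eq_wallisCoeff (n : ℕ) :
    Ring.choose (1 / 2 + n - 1 : ℝ) n = wallisCoeff n := by
  rw [← neg_one_pow_mul_choose_neg_half, Ring.choose_neg, Units.smul_def, zsmul_eq_mul,
    Int.cast_negOnePow_natCast, ← mul_assoc, ← mul_pow]
  norm_num

lemma hasSum_wallisCoeff_mul_pow {z : ℝ} (hz : |z| < 1) :
    HasSum (fun n => wallisCoeff n * z ^ n) (√(1 - z))⁻¹ := by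
  have h := (one_div_one_sub_rpow_hasFPowerSeriesOnBall_zero (1 / 2)).hasSum (y := z)
    (by simpa [← ENNReal.ofReal_one, Metric.eball_ofReal] using hz)
  simp only [FormalMultilinearSeries.ofScalars_apply_eq, zero_add,
    choose_half_add_sub_one_eq_wallisCoeff, smul_eq_mul] at h
  rw [sqrt_eq_rpow, ← one_div]
  simpa only [mul_comm] using h

lemma mul_tsum_wallisCoeff_succ_mul_pow {z : ℝ} (hz : |z| < 1) :
    z * ∑' n : ℕ, wallisCoeff (n + 1) * z ^ n = (√(1 - z))⁻¹ - 1 := by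
  have h := (hasSum_nat_add_iff' 1).2 (hasSum_wallisCoeff_mul_pow hz)
  simp only [sum_range_one, wallisCoeff_zero, pow_zero, mul_one] at h
  rw [← tsum_mul_left, ← h.tsum_eq]
  congr 1 with n
  ring

lemma tsum_wallisCoeff_succ_mul_pow {z : ℝ} (hz : |z| < 1) :
    ∑' n : ℕ, wallisCoeff (n + 1) * z ^ n = (√(1 - z) * (1 + √(1 - z)))⁻¹ := by
  rcases eq_or_ne z 0 with rfl | hz0
  · rw [tsum_eq_single 0 fun n hn => by simp [hn]]
    norm_num [wallisCoeff_one]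
  · have hs : 0 < √(1 - z) := sqrt_pos.2 (by linarith [le_abs_self z])
    have hsq : √(1 - z) ^ 2 = 1 - z := sq_sqrt (by linarith [le_abs_self z])
    have hs1 : 1 - √(1 - z) ≠ 0 := fun h1 => hz0 (by nlinarith)
    have h := mul_tsum_wallisCoeff_succ_mul_pow hz
    field_simp at h
    refine eq_inv_of_mul_eq_one_right (mul_left_cancel₀ hs1 ?_)
    linear_combination h - √(1 - z) * (∑' n : ℕ, wallisCoeff (n + 1) * z ^ n) * hsq

lemma hasSum_wallisCoeff_div_mul_pow {z : ℝ} (hz : |z| < 1) :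
    HasSum (fun n : ℕ => wallisCoeff n / n * z ^ n) (2 * log (2 / (1 + √(1 - z)))) := by
  have hS : ∀ w ∈ Set.Ioo (-1 : ℝ) 1, HasDerivAt (fun w => ∑' n : ℕ, wallisCoeff n / n * w ^ n)
      (∑' n : ℕ, wallisCoeff (n + 1) * w ^ n) w := fun w hw =>
    hasDerivAt_tsum_div_mul_pow abs_wallisCoeff_le_one (abs_lt.2 hw)
  have hG : ∀ w ∈ Set.Ioo (-1 : ℝ) 1, HasDerivAt (fun w => 2 * log (2 / (1 + √(1 - w))))
      (√(1 - w) * (1 + √(1 - w)))⁻¹ w := fun w hw =>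
    hasDerivAt_two_mul_log_two_div_one_add_sqrt hw.2
  have heq := isOpen_Ioo.eqOn_of_deriv_eq isPreconnected_Ioo
    (fun w hw => (hS w hw).differentiableAt.differentiableWithinAt)
    (fun w hw => (hG w hw).differentiableAt.differentiableWithinAt)
    (fun w hw => by
      rw [(hS w hw).deriv, (hG w hw).deriv, tsum_wallisCoeff_succ_mul_pow (abs_lt.2 hw)])
    (show (0 : ℝ) ∈ Set.Ioo (-1) 1 by norm_num)
    (by rw [tsum_eq_single 0 fun n hn => by simp [hn]]; norm_num)
  convert (summable_mul_pow_of_abs_le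
    (fun n => (abs_div_natCast_le _ n).trans (abs_wallisCoeff_le_one n)) hz).hasSum using 1
  exact (heq ⟨neg_lt_of_abs_lt hz, lt_of_abs_lt hz⟩).symm

lemma sqrt_one_sub_sq_two_mul_div_one_add_sq {d : ℝ} (hd : |d| ≤ 1) :
    √(1 - (2 * d / (1 + d ^ 2)) ^ 2) = (1 - d ^ 2) / (1 + d ^ 2) := by
  have hd2 : d ^ 2 ≤ 1 := by nlinarith [sq_abs d, abs_nonneg d]
  rw [show 1 - (2 * d / (1 + d ^ 2)) ^ 2 = ((1 - d ^ 2) / (1 + d ^ 2)) ^ 2 by field_simp; ring,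
    sqrt_sq (by positivity)]

/-- With `I_p = ∫₀^π sin^p(t) dt`, for every `d ∈ (0,1)`,
`∑_{n≥1} (1/n)·I_{2n}·(2d/(1+d²))^{2n} = 2π·ln(1 + d²)`.
(The `n = 0` term of the summand below vanishes since `1/0 = 0` in `ℝ`.) -/
theorem stmt_14 (d : ℝ) (hd : d ∈ Set.Ioo (0:ℝ) 1) :
    HasSum (fun n : ℕ =>
        (1 / (n : ℝ)) * (∫ t in (0:ℝ)..π, Real.sin t ^ (2 * n)) *
          (2 * d / (1 + d ^ 2)) ^ (2 * n))
      (2 * π * Real.log (1 + d ^ 2)) := by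
  obtain ⟨hd0, hd1⟩ := hd
  have hx : |(2 * d / (1 + d ^ 2)) ^ 2| < 1 := by
    rw [abs_of_nonneg (sq_nonneg _)]
    exact pow_lt_one₀ (by positivity) ((div_lt_one (by positivity)).2 (by nlinarith)) two_ne_zero
  have hsum := (hasSum_wallisCoeff_div_mul_pow hx).mul_left π
  rw [sqrt_one_sub_sq_two_mul_div_one_add_sq (abs_le.2 ⟨by linarith, hd1.le⟩),
    show 2 / (1 + (1 - d ^ 2) / (1 + d ^ 2)) = 1 + d ^ 2 by field_simp; ring] at hsum
  have hterm : ∀ n : ℕ, 1 / (n : ℝ) * (∫ t in (0 : ℝ)..π, Real.sin t ^ (2 * n)) *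
      (2 * d / (1 + d ^ 2)) ^ (2 * n) =
        π * (wallisCoeff n / n * ((2 * d / (1 + d ^ 2)) ^ 2) ^ n) :=
    fun n => by rw [integral_sin_pow_two_mul, pow_mul]; ring
  simp only [hterm]
  rwa [mul_comm 2 π, mul_assoc]
end

section
/- Let n ≥ 2 be an integer, a ∈ (0,1) and k ≥ 1 an integer. Define A_k = a − a^{2k+n−1}, B_k = −( (k+n−2)·a^{2k+n−1} + k·a^{2k+n−2} + k·a + k+n−2 ), and C_k = (k+n−2)·k·(1 − a^{2k+n−2}). Then the discriminant Δ_k = B_k² − 4·A_k·C_k satisfies Δ_k ≥ ((k+n−2) − k·a)² > 0. -/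
open Real

/-!
Put `m = k + n - 2` and `t = a ^ (2k+n-2)`, so that `A_k = a(1 - t)`, `-B_k = (m + k a) + t (m a + k)`
and `C_k = m k (1 - t)`. Since `(m + k a)² - (m - k a)² = 4 m k a`, the excess `Δ_k - (m - k a)²`
is a polynomial in `t` with nonnegative coefficients, `t² (m a - k)² + 2 t (m + k a)(m a + k) + 8 m k a t`.
-/

section

variable {R : Type*} [CommRing R]

theorem discriminant_sub_sq_eq (m k a t : R) :
    (-(m * (t * a) + k * t + k * a + m)) ^ 2 - 4 * (a - t * a) * (m * k * (1 - t))
        - (m - k * a) ^ 2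
      = t ^ 2 * (m * a - k) ^ 2 + 2 * t * (m + k * a) * (m * a + k) + 8 * m * k * a * t := by
  ring

variable [LinearOrder R] [IsStrictOrderedRing R]

theorem sq_sub_mul_le_discriminant {m k a t : R} (hm : 0 ≤ m) (hk : 0 ≤ k) (ha : 0 ≤ a)
    (ht : 0 ≤ t) :
    (m - k * a) ^ 2
      ≤ (-(m * (t * a) + k * t + k * a + m)) ^ 2 - 4 * (a - t * a) * (m * k * (1 - t)) := by
  have h := discriminant_sub_sq_eq m k a t
  have : 0 ≤ t ^ 2 * (m * a - k) ^ 2 + 2 * t * (m + k * a) * (m * a + k) + 8 * m * k * a * t := by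
    positivity
  linarith

end

/-- For `n ≥ 2`, `a ∈ (0,1)`, `k ≥ 1`, with
`A_k = a − a^{2k+n−1}`, `B_k = −((k+n−2)·a^{2k+n−1} + k·a^{2k+n−2} + k·a + (k+n−2))`,
`C_k = (k+n−2)·k·(1 − a^{2k+n−2})`, the discriminant `Δ_k = B_k² − 4·A_k·C_k`
satisfies `Δ_k ≥ ((k+n−2) − k·a)² > 0`. -/
theorem stmt_15 (n k : ℕ) (hn : 2 ≤ n) (hk : 1 ≤ k) (a : ℝ) (ha : a ∈ Set.Ioo (0:ℝ) 1) :
    (((k : ℝ) + n - 2) - k * a) ^ 2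
      ≤ (-((((k : ℝ) + n - 2) * a ^ (2 * k + n - 1) + k * a ^ (2 * k + n - 2)
            + k * a + ((k : ℝ) + n - 2)))) ^ 2
        - 4 * (a - a ^ (2 * k + n - 1)) * (((k : ℝ) + n - 2) * k * (1 - a ^ (2 * k + n - 2))) ∧
    0 < (((k : ℝ) + n - 2) - k * a) ^ 2 := by
  obtain ⟨ha0, ha1⟩ := ha
  have hk0 : (0 : ℝ) < k := by exact_mod_cast hk
  have hkm : (k : ℝ) ≤ (k : ℝ) + n - 2 := by
    have : (2 : ℝ) ≤ n := by exact_mod_cast hn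
    linarith
  have hka : (k : ℝ) * a < k := mul_lt_of_lt_one_right hk0 ha1
  rw [show 2 * k + n - 1 = (2 * k + n - 2) + 1 by omega, pow_succ]
  exact ⟨sq_sub_mul_le_discriminant (by linarith) hk0.le ha0.le (pow_nonneg ha0.le _),
    pow_pos (by linarith) 2⟩
end

section
/- Let n ≥ 2 be an integer, a ∈ (0,1) and k ≥ 1 an integer. With A_k = a − a^{2k+n−1}, B_k = −( (k+n−2)·a^{2k+n−1} + k·a^{2k+n−2} + k·a + k+n−2 ), and C_k = (k+n−2)·k·(1 − a^{2k+n−2}), the quadratic equation A_k·δ² + B_k·δ + C_k = 0 has exactly two real roots δ_k^{(1)} = (−B_k − √(B_k² − 4A_kC_k))/(2A_k) and δ_k^{(2)} = (−B_k + √(B_k² − 4A_kC_k))/(2A_k), and they satisfy 0 < δ_k^{(1)} < δ_k^{(2)}. -/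
open Real

/-! The coefficients `A_k = a(1 - t)`, `B_k`, `C_k = LK(1 - t)` with `t = a^{2k+n-2}`,
`K = k`, `L = k + n - 2` have signs `+, -, +`, so both roots of the quadratic are positive
(Vieta), and its discriminant is a sum of a square and `4(L + K)²at > 0`, so the roots are
distinct. -/

section Quadratic

variable {A B C : ℝ}

theorem sqrt_discrim_lt_neg (hA : 0 < A) (hB : B < 0) (hC : 0 < C) :
    √(discrim A B C) < -B := by
  rw [sqrt_lt' (by linarith), discrim]
  nlinarith [mul_pos hA hC]

theorem quadratic_roots_pos_lt (hA : 0 < A) (hB : B < 0) (hC : 0 < C)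
    (hD : 0 < discrim A B C) :
    0 < (-B - √(discrim A B C)) / (2 * A) ∧
      (-B - √(discrim A B C)) / (2 * A) < (-B + √(discrim A B C)) / (2 * A) := by
  have hs : 0 < √(discrim A B C) := sqrt_pos.mpr hD
  constructor
  · exact div_pos (by linarith [sqrt_discrim_lt_neg hA hB hC]) (by positivity)
  · exact div_lt_div_of_pos_right (by linarith) (by positivity)

theorem quadratic_eq_zero_iff_of_discrim_nonneg (hA : A ≠ 0) (hD : 0 ≤ discrim A B C)
    (x : ℝ) :
    A * x ^ 2 + B * x + C = 0 ↔
      x = (-B - √(discrim A B C)) / (2 * A) ∨ x = (-B + √(discrim A B C)) / (2 * A) := by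
  rw [sq, quadratic_eq_zero_iff hA (mul_self_sqrt hD).symm, or_comm]

end Quadratic

theorem discrim_shell_eq (a t K L : ℝ) :
    discrim (a - a * t) (-(L * (a * t) + K * t + K * a + L)) (L * K * (1 - t)) =
      (L - L * (a * t) - K * a + K * t) ^ 2 + 4 * (L + K) ^ 2 * (a * t) := by
  rw [discrim]
  ring

theorem discrim_shell_pos {a t K L : ℝ} (ha : 0 < a) (ht : 0 < t) (hKL : 0 < L + K) :
    0 < discrim (a - a * t) (-(L * (a * t) + K * t + K * a + L)) (L * K * (1 - t)) := by
  rw [discrim_shell_eq]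
  positivity

/-- For `n ≥ 2`, `a ∈ (0,1)`, `k ≥ 1`, with
`A_k = a − a^{2k+n−1}`, `B_k = −((k+n−2)·a^{2k+n−1} + k·a^{2k+n−2} + k·a + (k+n−2))`,
`C_k = (k+n−2)·k·(1 − a^{2k+n−2})`, the quadratic `A_k·δ² + B_k·δ + C_k = 0` has
exactly the two real roots `δ_k^{(1)} = (−B_k − √(B_k² − 4A_kC_k))/(2A_k)` and
`δ_k^{(2)} = (−B_k + √(B_k² − 4A_kC_k))/(2A_k)`, with `0 < δ_k^{(1)} < δ_k^{(2)}`. -/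
theorem stmt_16 (n k : ℕ) (hn : 2 ≤ n) (hk : 1 ≤ k) (a : ℝ) (ha : a ∈ Set.Ioo (0:ℝ) 1)
    (A B C δ₁ δ₂ : ℝ)
    (hA : A = a - a ^ (2 * k + n - 1))
    (hB : B = -(((k : ℝ) + n - 2) * a ^ (2 * k + n - 1) + k * a ^ (2 * k + n - 2)
        + k * a + ((k : ℝ) + n - 2)))
    (hC : C = ((k : ℝ) + n - 2) * k * (1 - a ^ (2 * k + n - 2)))
    (hδ₁ : δ₁ = (-B - Real.sqrt (B ^ 2 - 4 * A * C)) / (2 * A))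
    (hδ₂ : δ₂ = (-B + Real.sqrt (B ^ 2 - 4 * A * C)) / (2 * A)) :
    0 < δ₁ ∧ δ₁ < δ₂ ∧ ∀ δ : ℝ, A * δ ^ 2 + B * δ + C = 0 ↔ δ = δ₁ ∨ δ = δ₂ := by
  obtain ⟨ha0, ha1⟩ := ha
  set t := a ^ (2 * k + n - 2)
  have hpow : a ^ (2 * k + n - 1) = a * t := by
    rw [show 2 * k + n - 1 = 2 * k + n - 2 + 1 by omega, pow_succ']
  have ht0 : 0 < t := by positivity
  have ht1 : t < 1 := pow_lt_one₀ ha0.le ha1 (by omega)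
  have hK : (1 : ℝ) ≤ k := by exact_mod_cast hk
  have hL : (0 : ℝ) < k + n - 2 := by
    have : (2 : ℝ) ≤ n := by exact_mod_cast hn
    linarith
  rw [hpow] at hA hB
  have hApos : 0 < A := by rw [hA]; nlinarith
  have hBneg : B < 0 := by rw [hB]; nlinarith [mul_pos hL (mul_pos ha0 ht0)]
  have hCpos : 0 < C := by rw [hC]; exact mul_pos (by positivity) (by linarith)
  have hD : 0 < discrim A B C := by rw [hA, hB, hC]; exact discrim_shell_pos ha0 ht0 (by linarith)
  rw [← discrim] at hδ₁ hδ₂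
  subst hδ₁ hδ₂
  obtain ⟨hδ₁_pos, hδ₁_lt⟩ := quadratic_roots_pos_lt hApos hBneg hCpos hD
  exact ⟨hδ₁_pos, hδ₁_lt, quadratic_eq_zero_iff_of_discrim_nonneg hApos.ne' hD.le⟩
end

section
/- Let n ≥ 3 be an integer and a ∈ (0,1). For each integer k ≥ 1, define A_k = a − a^{2k+n−1}, B_k = −( (k+n−2)·a^{2k+n−1} + k·a^{2k+n−2} + k·a + k+n−2 ), C_k = (k+n−2)·k·(1 − a^{2k+n−2}), and δ_k^{(1)} = 2·C_k/( −B_k + √(B_k² − 4·A_k·C_k) ). Then the sequence (δ_k^{(1)})_{k≥1} is strictly increasing. -/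
open Real Finset

/-!
`δ_k` is the smaller root of `q_k(x) = A_k x² + B_k x + C_k`, and `q_k(k) < 0` gives `δ_k < k`.
In `A_k q_{k+1} - A_{k+1} q_k` the `x²` terms cancel, so this combination is affine in `x`; it is
positive at `0` and, by the inequality `2a(1 - aᴾ) ≤ P(1 - a)(1 + aᴾ⁺¹)` with `P = 2k + n - 2`,
also at `k`. Hence `q_{k+1}(δ_k) > 0`, and since `δ_k < k` lies left of the vertex of `q_{k+1}`,
`δ_k < δ_{k+1}`.
-/

noncomputable def smallerRoot (A B C : ℝ) : ℝ := 2 * C / (-B + √(discrim A B C))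

section QuadraticRoot

variable {A B C : ℝ}

lemma smallerRoot_eq (hA : A ≠ 0) (hD : 0 ≤ discrim A B C)
    (hden : -B + √(discrim A B C) ≠ 0) :
    smallerRoot A B C = (-B - √(discrim A B C)) / (2 * A) := by
  rw [smallerRoot, div_eq_div_iff hden (mul_ne_zero two_ne_zero hA)]
  have hs := mul_self_sqrt hD
  rw [discrim] at hs ⊢
  linear_combination hs

lemma quadratic_smallerRoot_eq_zero (hA : 0 < A) (hD : 0 ≤ discrim A B C)
    (hden : -B + √(discrim A B C) ≠ 0) :
    A * (smallerRoot A B C * smallerRoot A B C) + B * smallerRoot A B C + C = 0 := by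
  rw [smallerRoot_eq hA.ne' hD hden]
  exact (quadratic_eq_zero_iff hA.ne' (mul_self_sqrt hD).symm _).2 (Or.inr rfl)

lemma lt_smallerRoot_of_quadratic_pos (hA : 0 < A) (hD : 0 ≤ discrim A B C)
    (hden : -B + √(discrim A B C) ≠ 0) {x : ℝ} (hq : 0 < A * (x * x) + B * x + C)
    (hx : 2 * A * x + B < 0) :
    x < smallerRoot A B C := by
  have hs : √(discrim A B C) < -(2 * A * x + B) := by
    rw [sqrt_lt' (by linarith), discrim]
    nlinarith
  rw [smallerRoot_eq hA.ne' hD hden, lt_div_iff₀ (by positivity)]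
  linarith

lemma smallerRoot_lt_of_quadratic_neg (hA : 0 < A) (hD : 0 ≤ discrim A B C)
    (hden : -B + √(discrim A B C) ≠ 0) {x : ℝ} (hq : A * (x * x) + B * x + C < 0) :
    smallerRoot A B C < x := by
  have hs : -B - 2 * A * x < √(discrim A B C) := by
    rcases lt_or_ge (-B - 2 * A * x) 0 with hneg | hnonneg
    · exact hneg.trans_le (sqrt_nonneg _)
    · rw [lt_sqrt hnonneg, discrim]
      nlinarith
  rw [smallerRoot_eq hA.ne' hD hden, div_lt_iff₀ (by positivity)]
  linarith

end QuadraticRoot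

lemma mul_add_pos_of_mem_Icc {x k E F : ℝ} (hx : x ∈ Set.Icc 0 k) (hF : 0 < F)
    (hk : 0 < k * E + F) : 0 < x * E + F := by
  rcases le_or_gt 0 E with hE | hE
  · nlinarith [mul_nonneg hx.1 hE]
  · nlinarith [mul_le_mul_of_nonpos_right hx.2 hE.le]

lemma pow_add_pow_le_one_add_pow {a : ℝ} (ha0 : 0 ≤ a) (ha1 : a ≤ 1) {i j : ℕ} :
    a ^ i + a ^ j ≤ 1 + a ^ (i + j) := by
  nlinarith [mul_nonneg (sub_nonneg.2 (pow_le_one₀ ha0 ha1 (n := i)))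
    (sub_nonneg.2 (pow_le_one₀ ha0 ha1 (n := j))), pow_add a i j]

lemma two_mul_one_sub_pow_le {a : ℝ} (ha0 : 0 ≤ a) (ha1 : a ≤ 1) (P : ℕ) :
    2 * a * (1 - a ^ P) ≤ P * (1 - a) * (1 + a ^ (P + 1)) := by
  have hgeom : 2 * a * (1 - a ^ P) = (1 - a) * (2 * ∑ j ∈ range P, a ^ (j + 1)) := by
    have := geom_sum_mul a P
    simp only [pow_succ, ← sum_mul]
    linear_combination (2 * a) * this
  have hpair : 2 * ∑ j ∈ range P, a ^ (j + 1) ≤ P * (1 + a ^ (P + 1)) := calc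
    2 * ∑ j ∈ range P, a ^ (j + 1)
      = ∑ j ∈ range P, (a ^ (j + 1) + a ^ (P - j)) := by
        rw [sum_add_distrib, two_mul, ← sum_range_reflect (fun j ↦ a ^ (j + 1))]
        congr 1
        refine sum_congr rfl fun j hj ↦ ?_
        rw [mem_range] at hj
        congr 1
        omega
    _ ≤ ∑ j ∈ range P, (1 + a ^ (P + 1)) := by
        refine sum_le_sum fun j hj ↦ ?_
        rw [mem_range] at hj
        have := pow_add_pow_le_one_add_pow ha0 ha1 (i := j + 1) (j := P - j)
        rwa [show j + 1 + (P - j) = P + 1 by omega] at this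
    _ = P * (1 + a ^ (P + 1)) := by rw [sum_const, card_range, nsmul_eq_mul]
  rw [hgeom, mul_comm (P : ℝ), mul_assoc]
  exact mul_le_mul_of_nonneg_left hpair (sub_nonneg.2 ha1)

/-- With `t = a^(2k+n-2)` and `m = k+n-2` these are `A_k`, `B_k`, `C_k`; passing from `k` to
`k + 1` replaces `(t, k, m)` by `(t a², k + 1, m + 1)`. -/
def shellA (a t : ℝ) : ℝ := a - t * a
def shellB (a t k m : ℝ) : ℝ := -(m * (t * a) + k * t + k * a + m)
def shellC (t k m : ℝ) : ℝ := m * k * (1 - t)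

def shellQuad (a t k m x : ℝ) : ℝ := shellA a t * (x * x) + shellB a t k m * x + shellC t k m

noncomputable def shellRoot (a t k m : ℝ) : ℝ :=
  smallerRoot (shellA a t) (shellB a t k m) (shellC t k m)

section Shell

variable {a t k m : ℝ}

lemma shellA_pos (ha : 0 < a) (ht : t < 1) : 0 < shellA a t := by
  unfold shellA; nlinarith

lemma shellB_neg (ha : 0 < a) (ht : 0 < t) (hk : 0 < k) (hm : 0 < m) : shellB a t k m < 0 := by
  have : 0 < m * (t * a) + k * t + k * a + m := by positivity
  unfold shellB; linarith

lemma shellC_nonneg (ht : t ≤ 1) (hk : 0 ≤ k) (hm : 0 ≤ m) : 0 ≤ shellC t k m := by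
  unfold shellC; have := sub_nonneg.2 ht; positivity

lemma discrim_shell_nonneg (ht : 0 ≤ t) (hk : 0 ≤ k) (hm : 0 ≤ m) :
    0 ≤ discrim (shellA a t) (shellB a t k m) (shellC t k m) := by
  have hsos : discrim (shellA a t) (shellB a t k m) (shellC t k m)
      = (m * (t * a + 1) - k * (t + a)) ^ 2 + 4 * (m * k) * t * (1 + a) ^ 2 := by
    unfold discrim shellA shellB shellC; ring
  rw [hsos]; positivity

lemma shellRoot_denom_pos (ha : 0 < a) (ht : 0 < t) (hk : 0 < k) (hm : 0 < m) :
    0 < -shellB a t k m + √(discrim (shellA a t) (shellB a t k m) (shellC t k m)) :=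
  add_pos_of_pos_of_nonneg (neg_pos.2 (shellB_neg ha ht hk hm)) (sqrt_nonneg _)

lemma shellRoot_nonneg (ha : 0 < a) (ht0 : 0 < t) (ht1 : t ≤ 1) (hk : 0 < k) (hm : 0 < m) :
    0 ≤ shellRoot a t k m :=
  div_nonneg (mul_nonneg zero_le_two (shellC_nonneg ht1 hk.le hm.le))
    (shellRoot_denom_pos ha ht0 hk hm).le

lemma shellQuad_shellRoot (ha : 0 < a) (ht0 : 0 < t) (ht1 : t < 1) (hk : 0 < k) (hm : 0 < m) :
    shellQuad a t k m (shellRoot a t k m) = 0 :=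
  quadratic_smallerRoot_eq_zero (shellA_pos ha ht1) (discrim_shell_nonneg ht0.le hk.le hm.le)
    (shellRoot_denom_pos ha ht0 hk hm).ne'

lemma shellRoot_lt (ha : 0 < a) (ht0 : 0 < t) (ht1 : t < 1) (hk : 0 < k) (hm : 0 < m) :
    shellRoot a t k m < k := by
  have hval : shellQuad a t k m k = -(k * t * (1 + a) * (k + m)) := by
    unfold shellQuad shellA shellB shellC; ring
  have hneg : shellQuad a t k m k < 0 := by
    have : 0 < 1 + a := by linarith
    rw [hval, neg_neg_iff_pos]
    positivity
  exact smallerRoot_lt_of_quadratic_neg (shellA_pos ha ht1)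
    (discrim_shell_nonneg ht0.le hk.le hm.le) (shellRoot_denom_pos ha ht0 hk hm).ne' hneg

lemma shellA_mul_shellQuad_succ (a t k m x : ℝ) :
    shellA a t * shellQuad a (t * a ^ 2) (k + 1) (m + 1) x
      = shellA a (t * a ^ 2) * shellQuad a t k m x
        + a * (x * ((1 + a) * (a ^ 2 * t ^ 2 - 1 + (k + m + 1) * t * (1 - a ^ 2)))
          + (1 - t) * (1 - a ^ 2 * t) * (k + m + 1)) := by
  unfold shellQuad shellA shellB shellC; ring

lemma shell_cross_term_pos_at_k (ha0 : 0 < a) (ha1 : a < 1) (ht0 : 0 < t) (ht1 : t < 1)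
    (hk : 0 < k) (hm : k ≤ m) (hL : 2 * a * (1 - t) ≤ (k + m) * (1 - a) * (1 + t * a)) :
    0 < k * ((1 + a) * (a ^ 2 * t ^ 2 - 1 + (k + m + 1) * t * (1 - a ^ 2)))
        + (1 - t) * (1 - a ^ 2 * t) * (k + m + 1) := by
  have hta2 : t * a ^ 2 < 1 := by nlinarith [mul_lt_mul_of_pos_left ha1 ha0]
  have hka : 0 < k * (1 + a) := by nlinarith
  have hI : (1 - (t * a) ^ 2) - (k + m + 1) * t * (1 + a) * (1 - a)
      ≤ (1 - t * a ^ 2) * ((1 - t) - (k + m) * t * (1 - a)) := by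
    nlinarith [mul_nonneg (mul_nonneg ht0.le ha0.le) (sub_nonneg.mpr hL)]
  have h1 : 0 < (1 - t * a ^ 2) * ((k + m + 1 - k * (1 + a)) * (1 - t)) :=
    mul_pos (by linarith) (mul_pos (by nlinarith) (by linarith))
  have h2 : 0 ≤ k * (1 + a) * (k + m) * t * ((1 - a) * (1 - t * a ^ 2)) :=
    mul_nonneg (mul_nonneg (mul_nonneg hka.le (by linarith)) ht0.le)
      (mul_nonneg (by linarith) (by linarith))
  nlinarith [mul_le_mul_of_nonneg_left hI hka.le]

lemma shellRoot_lt_shellRoot_succ (ha0 : 0 < a) (ha1 : a < 1) (ht0 : 0 < t) (ht1 : t < 1)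
    (hk : 1 ≤ k) (hm : k ≤ m) (hL : 2 * a * (1 - t) ≤ (k + m) * (1 - a) * (1 + t * a)) :
    shellRoot a t k m < shellRoot a (t * a ^ 2) (k + 1) (m + 1) := by
  have hk0 : 0 < k := by linarith
  have hm0 : 0 < m := by linarith
  have ht'1 : t * a ^ 2 < 1 := by nlinarith [mul_lt_mul_of_pos_left ha1 ha0]
  have hA' := shellA_pos ha0 ht'1
  have hd0 := shellRoot_nonneg ha0 ht0 ht1.le hk0 hm0
  have hdk := shellRoot_lt ha0 ht0 ht1 hk0 hm0
  have hroot := shellQuad_shellRoot ha0 ht0 ht1 hk0 hm0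
  have ht'0 : 0 < t * a ^ 2 := by positivity
  apply lt_smallerRoot_of_quadratic_pos hA'
    (discrim_shell_nonneg ht'0.le (by linarith) (by linarith))
    (shellRoot_denom_pos ha0 ht'0 (by linarith) (by linarith)).ne'
  · change 0 < shellQuad a (t * a ^ 2) (k + 1) (m + 1) (shellRoot a t k m)
    refine pos_of_mul_pos_right ?_ (shellA_pos ha0 ht1).le
    rw [shellA_mul_shellQuad_succ, hroot, mul_zero, zero_add]
    refine mul_pos ha0 (mul_add_pos_of_mem_Icc ⟨hd0, hdk.le⟩ ?_
      (shell_cross_term_pos_at_k ha0 ha1 ht0 ht1 hk0 hm hL))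
    have : 0 < 1 - a ^ 2 * t := by linarith
    have : 0 < 1 - t := by linarith
    positivity
  · have hvertex : 2 * shellA a (t * a ^ 2) * k + shellB a (t * a ^ 2) (k + 1) (m + 1) < 0 := by
      unfold shellA shellB
      nlinarith [mul_pos (mul_pos ht0 (pow_pos ha0 3)) hk0,
        mul_pos (mul_pos ht0 (pow_pos ha0 2)) (by linarith : (0 : ℝ) < k + 1),
        mul_nonneg (sub_nonneg.2 ha1.le) (sub_nonneg.2 hk)]
    nlinarith [mul_lt_mul_of_pos_left hdk hA']

end Shell

/-- For `n ≥ 3` and `a ∈ (0,1)`, the sequence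
`δ_k^{(1)} = 2·C_k/(−B_k + √(B_k² − 4·A_k·C_k))`, where
`A_k = a − a^{2k+n−1}`, `B_k = −((k+n−2)·a^{2k+n−1} + k·a^{2k+n−2} + k·a + (k+n−2))`,
`C_k = (k+n−2)·k·(1 − a^{2k+n−2})`, is strictly increasing for `k ≥ 1`. -/
theorem stmt_17 (n : ℕ) (hn : 3 ≤ n) (a : ℝ) (ha : a ∈ Set.Ioo (0:ℝ) 1) :
    StrictMonoOn (fun k : ℕ =>
      (2 * (((k : ℝ) + n - 2) * k * (1 - a ^ (2 * k + n - 2)))) /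
        (-(-(((k : ℝ) + n - 2) * a ^ (2 * k + n - 1) + k * a ^ (2 * k + n - 2)
              + k * a + ((k : ℝ) + n - 2)))
          + Real.sqrt
            ((-(((k : ℝ) + n - 2) * a ^ (2 * k + n - 1) + k * a ^ (2 * k + n - 2)
                + k * a + ((k : ℝ) + n - 2))) ^ 2
              - 4 * (a - a ^ (2 * k + n - 1)) *
                (((k : ℝ) + n - 2) * k * (1 - a ^ (2 * k + n - 2))))))
      (Set.Ici 1) := by
  obtain ⟨ha0, ha1⟩ := ha
  refine strictMonoOn_of_lt_add_one Set.ordConnected_Ici fun k _ hk _ ↦ ?_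
  have hk1 : (1 : ℝ) ≤ k := by exact_mod_cast hk
  have hn3 : (3 : ℝ) ≤ n := by exact_mod_cast hn
  set P := 2 * k + n - 2 with hP
  have hPcast : (P : ℝ) = k + (k + n - 2) := by
    rw [hP, Nat.cast_sub (by omega)]; push_cast; ring
  have h1 : a ^ (2 * k + n - 1) = a ^ P * a := by rw [← pow_succ]; congr 1; omega
  have h2 : a ^ (2 * (k + 1) + n - 2) = a ^ P * a ^ 2 := by rw [← pow_add]; congr 1; omega
  have h3 : a ^ (2 * (k + 1) + n - 1) = a ^ P * a ^ 2 * a := by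
    rw [← h2, ← pow_succ]; congr 1; omega
  have hL := two_mul_one_sub_pow_le ha0.le ha1.le P
  rw [pow_succ, hPcast] at hL
  rw [h1, h2, h3]
  push_cast
  change shellRoot a (a ^ P) k (k + n - 2) < shellRoot a (a ^ P * a ^ 2) (k + 1) (k + 1 + n - 2)
  convert shellRoot_lt_shellRoot_succ (m := k + n - 2) ha0 ha1 (pow_pos ha0 P)
    (pow_lt_one₀ ha0.le ha1 (by omega)) hk1 (by linarith) (by linarith) using 2
  ring
end

section
/- Let n ≥ 3 be an integer and a ∈ (0,1). The function h_{a,n} : [1,∞) → ℝ defined by h_{a,n}(t) = √((t+n−2)/t)·(a^{2t+n−1} + 1) + a·√(t/(t+n−2))·(a^{2t+n−3} + 1) is strictly decreasing on [1,∞). -/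
/-!
Write `s = √((t+n-2)/t)` and `u = a^(2t+n-3)`. Since `√(t/(t+n-2)) = s⁻¹` and
`a^(2t+n-1) = a² u`, the function is `F(s, u) = s (a² u + 1) + (a / s) (u + 1)`.
As `t` grows, both `s ≥ 1` and `u ∈ (0, 1]` strictly decrease. `F` is increasing in `u`, and on
`s ≥ 1` it is increasing in `s` as well, because
`F(s₁, u) - F(s₂, u) = (s₁ - s₂) (a² u + 1 - a (u + 1) / (s₁ s₂))` and
`a² u + 1 - a (u + 1) = (1 - a) (1 - a u) > 0`.
-/

open Real

noncomputable section

def shellProfile (a s u : ℝ) : ℝ :=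
  s * (a ^ 2 * u + 1) + a / s * (u + 1)

lemma shellProfile_lt_of_lt_u {a s u₁ u₂ : ℝ} (ha : 0 < a) (hs : 0 < s) (hu : u₂ < u₁) :
    shellProfile a s u₂ < shellProfile a s u₁ := by
  unfold shellProfile
  gcongr

lemma shellProfile_lt_of_lt_s {a s₁ s₂ u : ℝ} (ha₀ : 0 < a) (ha₁ : a < 1) (hu₀ : 0 ≤ u)
    (hu₁ : u ≤ 1) (hs₂ : 1 ≤ s₂) (hs : s₂ < s₁) :
    shellProfile a s₂ u < shellProfile a s₁ u := by
  have hs₁₂ : 1 ≤ s₁ * s₂ := by nlinarith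
  have hs₁₀ : s₁ ≠ 0 := (by linarith : 0 < s₁).ne'
  have hs₂₀ : s₂ ≠ 0 := (by linarith : 0 < s₂).ne'
  have hgap : a * (u + 1) / (s₁ * s₂) < a ^ 2 * u + 1 :=
    calc a * (u + 1) / (s₁ * s₂) ≤ a * (u + 1) := div_le_self (by positivity) hs₁₂
      _ < a ^ 2 * u + 1 := by
        have hau : a * u < 1 := by nlinarith
        nlinarith [mul_pos (sub_pos.2 ha₁) (sub_pos.2 hau)]
  have hdiff : shellProfile a s₁ u - shellProfile a s₂ u =
      (s₁ - s₂) * (a ^ 2 * u + 1 - a * (u + 1) / (s₁ * s₂)) := by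
    unfold shellProfile
    field_simp
    ring
  have := mul_pos (sub_pos.2 hs) (sub_pos.2 hgap)
  linarith

lemma shellProfile_eq (m : ℝ) {a : ℝ} (ha : 0 < a) (t : ℝ) :
    √((t + m - 2) / t) * (a ^ (2 * t + m - 1) + 1) +
        a * √(t / (t + m - 2)) * (a ^ (2 * t + m - 3) + 1) =
      shellProfile a (√((t + m - 2) / t)) (a ^ (2 * t + m - 3)) := by
  have hpow : a ^ (2 * t + m - 1) = a ^ 2 * a ^ (2 * t + m - 3) := by
    rw [← rpow_two, ← rpow_add ha]
    ring_nf
  rw [shellProfile, hpow, ← inv_div (t + m - 2), sqrt_inv, div_eq_mul_inv]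
  ring

lemma strictAntiOn_sqrt_add_div_self {c : ℝ} (hc : 0 < c) :
    StrictAntiOn (fun t : ℝ => √((t + c) / t)) (Set.Ioi 0) := by
  intro t₁ (ht₁ : 0 < t₁) t₂ (ht₂ : 0 < t₂) hlt
  refine sqrt_lt_sqrt (by positivity) ?_
  rw [add_div, add_div, div_self ht₁.ne', div_self ht₂.ne']
  gcongr

lemma one_le_sqrt_add_div_self {c t : ℝ} (hc : 0 ≤ c) (ht : 0 < t) : 1 ≤ √((t + c) / t) :=
  one_le_sqrt.2 ((one_le_div ht).2 (by linarith))

/-- For `n ≥ 3` and `a ∈ (0,1)`, the function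
`h_{a,n}(t) = √((t+n−2)/t)·(a^{2t+n−1} + 1) + a·√(t/(t+n−2))·(a^{2t+n−3} + 1)`
is strictly decreasing on `[1,∞)`. -/
theorem stmt_18 (n : ℕ) (hn : 3 ≤ n) (a : ℝ) (ha : a ∈ Set.Ioo (0:ℝ) 1) :
    StrictAntiOn (fun t : ℝ =>
      Real.sqrt ((t + n - 2) / t) * (a ^ (2 * t + (n : ℝ) - 1) + 1) +
        a * Real.sqrt (t / (t + n - 2)) * (a ^ (2 * t + (n : ℝ) - 3) + 1))
      (Set.Ici (1:ℝ)) := by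
  obtain ⟨ha₀, ha₁⟩ := ha
  have hn : (3 : ℝ) ≤ n := by exact_mod_cast hn
  intro t₁ (ht₁ : 1 ≤ t₁) t₂ (ht₂ : 1 ≤ t₂) hlt
  simp only [shellProfile_eq (n : ℝ) ha₀]
  have hs : √((t₂ + n - 2) / t₂) < √((t₁ + n - 2) / t₁) := by
    simpa only [add_sub_assoc] using strictAntiOn_sqrt_add_div_self (c := (n : ℝ) - 2)
      (by linarith) (show (0 : ℝ) < t₁ by linarith) (show (0 : ℝ) < t₂ by linarith) hlt
  have hs₂ : 1 ≤ √((t₂ + n - 2) / t₂) := by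
    simpa only [add_sub_assoc] using one_le_sqrt_add_div_self (c := (n : ℝ) - 2)
      (by linarith) (show (0 : ℝ) < t₂ by linarith)
  calc shellProfile a (√((t₂ + n - 2) / t₂)) (a ^ (2 * t₂ + n - 3))
      < shellProfile a (√((t₁ + n - 2) / t₁)) (a ^ (2 * t₂ + n - 3)) :=
        shellProfile_lt_of_lt_s ha₀ ha₁ (by positivity)
          (rpow_le_one ha₀.le ha₁.le (by linarith)) hs₂ hs
    _ < shellProfile a (√((t₁ + n - 2) / t₁)) (a ^ (2 * t₁ + n - 3)) :=
        shellProfile_lt_of_lt_u ha₀ (by linarith)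
          (rpow_lt_rpow_of_exponent_gt ha₀ ha₁ (by linarith))

end
end

section
/- Let n ≥ 3 be an integer, t ≥ 1 a real number, and a ∈ (0,1). Then g_{t,n}(a) := ((n+t−2)/t)·a^{n+2t−1} − a^{n+2t−3} + (n−2)/t > 0. More precisely, g_{t,n} attains its minimum on (0,1) at a_{t,n} = √( (t/(n+t−2))·((n+2t−3)/(n+2t−1)) ), and g_{t,n}(a_{t,n}) ≥ −1/(t + (n−1)/2) + (n−2)/t > 0. -/
/-!
Write `q = n + 2t - 3`, `c = (n+t-2)/t` and `g(b) = c b^(q+2) - b^q`, and let `A > 0` with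
`c A² = q/(q+2)`. Substituting `b = A x` gives `g(A x) = A^q (q/(q+2) · x^(q+2) - x^q)`, and by
weighted AM-GM `x^q = (x^(q+2))^(q/(q+2)) · 1^(2/(q+2)) ≤ q/(q+2) · x^(q+2) + 2/(q+2)`, with
equality at `x = 1`. Hence `g` is minimal at `A`, with value `-2/(q+2) · A^q`. Since `c ≥ 1` we
have `A ≤ 1`, so this value is at least `-2/(q+2) = -1/(t + (n-1)/2)`, and `2/(q+2) < (n-2)/t`
as `n ≥ 3`.
-/

open Real

namespace Real

variable {c q A : ℝ}

theorem rpow_le_div_mul_rpow_add_two {x : ℝ} (hq : 0 ≤ q) (hx : 0 ≤ x) :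
    x ^ q ≤ q / (q + 2) * x ^ (q + 2) + 2 / (q + 2) := by
  have hq2 : 0 < q + 2 := by linarith
  have hamgm := geom_mean_le_arith_mean2_weighted (w₁ := q / (q + 2)) (w₂ := 2 / (q + 2))
    (p₁ := x ^ (q + 2)) (p₂ := 1) (by positivity) (by positivity) (by positivity) zero_le_one
    (by field_simp)
  rwa [one_rpow, mul_one, mul_one, ← rpow_mul hx, mul_div_cancel₀ _ hq2.ne'] at hamgm

theorem mul_rpow_add_two_sub_rpow_mul (hA : 0 < A) (hcA : c * A ^ 2 = q / (q + 2)) {x : ℝ}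
    (hx : 0 ≤ x) :
    c * (A * x) ^ (q + 2) - (A * x) ^ q = A ^ q * (q / (q + 2) * x ^ (q + 2) - x ^ q) := by
  rw [mul_rpow hA.le hx, mul_rpow hA.le hx, rpow_add hA, rpow_two, ← hcA]
  ring

theorem mul_rpow_add_two_sub_rpow_of_sq (hq : 0 ≤ q) (hA : 0 < A)
    (hcA : c * A ^ 2 = q / (q + 2)) :
    c * A ^ (q + 2) - A ^ q = -(2 / (q + 2)) * A ^ q := by
  have h := mul_rpow_add_two_sub_rpow_mul hA hcA zero_le_one
  rw [mul_one, one_rpow, one_rpow] at h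
  rw [h]
  field_simp
  ring

theorem isMinOn_mul_rpow_add_two_sub_rpow (hq : 0 ≤ q) (hA : 0 < A)
    (hcA : c * A ^ 2 = q / (q + 2)) :
    IsMinOn (fun b => c * b ^ (q + 2) - b ^ q) (Set.Ici 0) A := by
  intro b (hb : 0 ≤ b)
  have hAb := mul_rpow_add_two_sub_rpow_mul hA hcA (div_nonneg hb hA.le)
  rw [mul_div_cancel₀ _ hA.ne'] at hAb
  show c * A ^ (q + 2) - A ^ q ≤ c * b ^ (q + 2) - b ^ q
  rw [mul_rpow_add_two_sub_rpow_of_sq hq hA hcA, hAb, mul_comm _ (A ^ q)]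
  refine mul_le_mul_of_nonneg_left ?_ (by positivity)
  linarith [rpow_le_div_mul_rpow_add_two hq (div_nonneg hb hA.le)]

end Real

/-- For integer `n ≥ 3`, real `t ≥ 1` and `a ∈ (0,1)`, the quantity
`g_{t,n}(a) = ((n+t−2)/t)·a^{n+2t−1} − a^{n+2t−3} + (n−2)/t` is positive; more
precisely, `g_{t,n}` attains its minimum on `(0,1)` at
`a_{t,n} = √((t/(n+t−2))·((n+2t−3)/(n+2t−1)))`, and
`g_{t,n}(a_{t,n}) ≥ −1/(t + (n−1)/2) + (n−2)/t > 0`. -/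
theorem stmt_19 (n : ℕ) (hn : 3 ≤ n) (t : ℝ) (ht : 1 ≤ t) (a : ℝ)
    (ha : a ∈ Set.Ioo (0:ℝ) 1) :
    0 < ((n : ℝ) + t - 2) / t * a ^ ((n : ℝ) + 2 * t - 1)
        - a ^ ((n : ℝ) + 2 * t - 3) + ((n : ℝ) - 2) / t ∧
    (∀ b ∈ Set.Ioo (0:ℝ) 1,
      ((n : ℝ) + t - 2) / t *
          Real.sqrt ((t / ((n : ℝ) + t - 2)) * (((n : ℝ) + 2 * t - 3) / ((n : ℝ) + 2 * t - 1)))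
            ^ ((n : ℝ) + 2 * t - 1)
        - Real.sqrt ((t / ((n : ℝ) + t - 2)) * (((n : ℝ) + 2 * t - 3) / ((n : ℝ) + 2 * t - 1)))
            ^ ((n : ℝ) + 2 * t - 3)
        + ((n : ℝ) - 2) / t
      ≤ ((n : ℝ) + t - 2) / t * b ^ ((n : ℝ) + 2 * t - 1)
          - b ^ ((n : ℝ) + 2 * t - 3) + ((n : ℝ) - 2) / t) ∧
    (-1 / (t + ((n : ℝ) - 1) / 2) + ((n : ℝ) - 2) / t
      ≤ ((n : ℝ) + t - 2) / t *
          Real.sqrt ((t / ((n : ℝ) + t - 2)) * (((n : ℝ) + 2 * t - 3) / ((n : ℝ) + 2 * t - 1)))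
            ^ ((n : ℝ) + 2 * t - 1)
        - Real.sqrt ((t / ((n : ℝ) + t - 2)) * (((n : ℝ) + 2 * t - 3) / ((n : ℝ) + 2 * t - 1)))
            ^ ((n : ℝ) + 2 * t - 3)
        + ((n : ℝ) - 2) / t) ∧
    0 < -1 / (t + ((n : ℝ) - 1) / 2) + ((n : ℝ) - 2) / t := by
  have hN : (3 : ℝ) ≤ n := by exact_mod_cast hn
  have ht0 : 0 < t := by linarith
  have hd : 0 < (n : ℝ) + t - 2 := by linarith
  rw [show (n : ℝ) + 2 * t - 1 = (n : ℝ) + 2 * t - 3 + 2 by ring,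
    show t + ((n : ℝ) - 1) / 2 = ((n : ℝ) + 2 * t - 3 + 2) / 2 by ring]
  set q := (n : ℝ) + 2 * t - 3
  set A := √(t / ((n : ℝ) + t - 2) * (q / (q + 2)))
  have hq : 0 < q := by linarith
  have hA : 0 < A := sqrt_pos.2 (by positivity)
  have hcA : ((n : ℝ) + t - 2) / t * A ^ 2 = q / (q + 2) := by
    rw [sq_sqrt (by positivity)]
    field_simp
  have hA1 : A ≤ 1 := sqrt_le_one.2 <| mul_le_one₀
    ((div_le_one hd).2 (by linarith)) (by positivity) ((div_le_one (by linarith)).2 (by linarith))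
  have hmin := isMinOn_mul_rpow_add_two_sub_rpow hq.le hA hcA
  have hhalf : -1 / ((q + 2) / 2) = -(2 / (q + 2)) := by field_simp
  have hbound : -1 / ((q + 2) / 2) ≤ ((n : ℝ) + t - 2) / t * A ^ (q + 2) - A ^ q := by
    rw [mul_rpow_add_two_sub_rpow_of_sq hq.le hA hcA, hhalf, neg_mul, neg_le_neg_iff]
    exact mul_le_of_le_one_right (by positivity) (rpow_le_one hA.le hA1 hq.le)
  have hpos : 0 < -1 / ((q + 2) / 2) + ((n : ℝ) - 2) / t := by
    rw [hhalf, neg_add_eq_sub, sub_pos, div_lt_div_iff₀ (by linarith) ht0]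
    nlinarith
  have hle : ∀ b ∈ Set.Ioo (0 : ℝ) 1, ((n : ℝ) + t - 2) / t * A ^ (q + 2) - A ^ q ≤
      ((n : ℝ) + t - 2) / t * b ^ (q + 2) - b ^ q := fun b hb => hmin (Set.mem_Ici.2 hb.1.le)
  refine ⟨by linarith [hle a ha], fun b hb => by linarith [hle b hb], by linarith, hpos⟩
end
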